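/- arXiv:2006.14888 — 4 statements merged into one kernel-verified Lean document; each statement's English description precedes it below -/
import Mathlib

section
/- Let r : W → ℝ≥0 satisfy r(w) = r(1−w), let σ²_CR = (1/N_A)Σ_{w∈W} r(w), and for even H let 𝒦_H be the family of all C(N_A/2, H/2) designs of size H (subsets of W of size H closed under mirroring). Define V(H) as the average over 𝒲 ∈ 𝒦_H of ((1/H)Σ_{w∈𝒲} r(w) − σ²_CR)². Then V(H) = 2·((N_A − H)/(H·N_A))·(p̄ − q̄), where p̄ = (1/N_A)Σ_{w} r(w)² and q̄ is the average of r(w)r(w') over all ordered pairs of distinct, non-mirror assignment vectors (of which there are N_A(N_A − 2)). Consequently, since p̄ ≥ q̄, V(H) is (weakly) decreasing in H, and strictly decreasing if r is not constant. -/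
open Finset
variable {α : Type*} [DecidableEq α]

lemma count_mem (U : Finset α) (a : α) (ha : a ∈ U) (k : ℕ) :
    ((U.powersetCard (k+1)).filter (fun S => a ∈ S)).card = (U.card - 1).choose k := by
  have h1 : ((U.erase a).powersetCard k).card = (U.card - 1).choose k := by
    rw [card_powersetCard, card_erase_of_mem ha]
  rw [← h1]
  apply Finset.card_bij' (fun S _ => S.erase a) (fun T _ => insert a T)
  · intro S hS
    simp only [mem_filter] at hS
    exact insert_erase hS.2
  · intro T hT
    simp only [mem_powersetCard] at hT
    have haT : a ∉ T := fun h => (mem_erase.mp (hT.1 h)).1 rfl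
    exact erase_insert haT
  · intro S hS
    simp only [mem_filter, mem_powersetCard] at hS
    simp only [mem_powersetCard]
    obtain ⟨⟨hsub, hcard⟩, haS⟩ := hS
    constructor
    · intro x hx
      simp only [mem_erase] at hx ⊢
      exact ⟨hx.1, hsub hx.2⟩
    · rw [card_erase_of_mem haS, hcard]; omega
  · intro T hT
    simp only [mem_powersetCard] at hT
    simp only [mem_filter, mem_powersetCard]
    obtain ⟨hsub, hcard⟩ := hT
    have haT : a ∉ T := fun h => (mem_erase.mp (hsub h)).1 rfl
    refine ⟨⟨?_, ?_⟩, mem_insert_self a T⟩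
    · intro x hx
      rcases mem_insert.mp hx with h | h
      · exact h ▸ ha
      · exact (mem_erase.mp (hsub h)).2
    · rw [card_insert_of_notMem haT, hcard]

lemma count_mem2 (U : Finset α) (a b : α) (ha : a ∈ U) (hb : b ∈ U) (hab : a ≠ b) (k : ℕ) :
    ((U.powersetCard (k+2)).filter (fun S => a ∈ S ∧ b ∈ S)).card = (U.card - 2).choose k := by
  have h1 : (((U.erase a).erase b).powersetCard k).card = (U.card - 2).choose k := by
    rw [card_powersetCard, card_erase_of_mem (mem_erase.mpr ⟨hab.symm, hb⟩),
      card_erase_of_mem ha]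
    rw [Nat.sub_sub]
  rw [← h1]
  apply Finset.card_bij' (fun S _ => (S.erase a).erase b) (fun T _ => insert a (insert b T))
  · intro S hS
    simp only [mem_filter] at hS
    rw [insert_erase (mem_erase.mpr ⟨hab.symm, hS.2.2⟩ : b ∈ S.erase a), insert_erase hS.2.1]
  · intro T hT
    simp only [mem_powersetCard] at hT
    have hbT : b ∉ T := fun h => (mem_erase.mp (hT.1 h)).1 rfl
    have haT : a ∉ insert b T := by
      intro h
      rcases mem_insert.mp h with h | h
      · exact hab h
      · exact (mem_erase.mp (mem_of_mem_erase (hT.1 h))).1 rfl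
    rw [erase_insert haT, erase_insert hbT]
  · intro S hS
    simp only [mem_filter, mem_powersetCard] at hS
    simp only [mem_powersetCard]
    obtain ⟨⟨hsub, hcard⟩, haS, hbS⟩ := hS
    constructor
    · intro x hx
      simp only [mem_erase] at hx ⊢
      exact ⟨hx.1, hx.2.1, hsub hx.2.2⟩
    · rw [card_erase_of_mem (mem_erase.mpr ⟨hab.symm, hbS⟩), card_erase_of_mem haS, hcard]; omega
  · intro T hT
    simp only [mem_powersetCard] at hT
    simp only [mem_filter, mem_powersetCard]
    obtain ⟨hsub, hcard⟩ := hT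
    have hbT : b ∉ T := fun h => (mem_erase.mp (hsub h)).1 rfl
    have haT : a ∉ insert b T := by
      intro h
      rcases mem_insert.mp h with h | h
      · exact hab h
      · exact (mem_erase.mp (mem_of_mem_erase (hsub h))).1 rfl
    refine ⟨⟨?_, ?_⟩, mem_insert_self a _, mem_insert_of_mem (mem_insert_self b T)⟩
    · intro x hx
      rcases mem_insert.mp hx with h | h
      · exact h ▸ ha
      rcases mem_insert.mp h with h | h
      · exact h ▸ hb
      · exact mem_of_mem_erase (mem_of_mem_erase (hsub h))
    · rw [card_insert_of_notMem haT, card_insert_of_notMem hbT, hcard]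

lemma count_mem2_one (U : Finset α) (a b : α) (hab : a ≠ b) :
    ((U.powersetCard 1).filter (fun S => a ∈ S ∧ b ∈ S)).card = 0 := by
  rw [Finset.card_eq_zero, Finset.filter_eq_empty_iff]
  rintro S hS ⟨haS, hbS⟩
  have h2 : 1 < S.card := Finset.one_lt_card.mpr ⟨a, haS, b, hbS, hab⟩
  have := (mem_powersetCard.mp hS).2
  omega

lemma sum_powersetCard_sum (U : Finset α) (k : ℕ) (g : α → ℝ) :
    ∑ S ∈ U.powersetCard (k+1), ∑ a ∈ S, g a
      = ((U.card - 1).choose k : ℝ) * ∑ a ∈ U, g a := by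
  have key : ∀ S ∈ U.powersetCard (k+1), ∑ a ∈ S, g a
      = ∑ a ∈ U, (if a ∈ S then g a else 0) := by
    intro S hS
    rw [Finset.sum_ite_mem, Finset.inter_eq_right.mpr (mem_powersetCard.mp hS).1]
  rw [Finset.sum_congr rfl key, Finset.sum_comm]
  rw [Finset.mul_sum]
  refine Finset.sum_congr rfl fun a ha => ?_
  rw [← Finset.sum_filter, Finset.sum_const, count_mem U a ha k, nsmul_eq_mul]

lemma sum_powersetCard_sq (U : Finset α) (k : ℕ) (g : α → ℝ) :
    ∑ S ∈ U.powersetCard (k+2), (∑ a ∈ S, g a)^2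
      = ((U.card - 1).choose (k+1) : ℝ) * ∑ a ∈ U, (g a)^2
        + ((U.card - 2).choose k : ℝ)
          * ((∑ a ∈ U, g a)^2 - ∑ a ∈ U, (g a)^2) := by
  have key : ∀ S ∈ U.powersetCard (k+2), (∑ a ∈ S, g a)^2
      = ∑ a ∈ U, ∑ b ∈ U, (if a ∈ S ∧ b ∈ S then g a * g b else 0) := by
    intro S hS
    have h1 : ∑ a ∈ S, g a = ∑ a ∈ U, (if a ∈ S then g a else 0) := by
      rw [Finset.sum_ite_mem, Finset.inter_eq_right.mpr (mem_powersetCard.mp hS).1]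
    rw [h1, sq, Finset.sum_mul_sum]
    refine Finset.sum_congr rfl fun a _ => Finset.sum_congr rfl fun b _ => ?_
    by_cases h1 : a ∈ S <;> by_cases h2 : b ∈ S <;> simp [h1, h2]
  rw [Finset.sum_congr rfl key, Finset.sum_comm]
  have key2 : ∀ a ∈ U, ∑ b ∈ U, ∑ S ∈ U.powersetCard (k+2),
        (if a ∈ S ∧ b ∈ S then g a * g b else 0)
      = ((U.card - 1).choose (k+1) : ℝ) * (g a)^2
        + ((U.card - 2).choose k : ℝ) * (g a * ((∑ c ∈ U, g c) - g a)) := by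
    intro a ha
    have hcount : ∀ b, ∑ S ∈ U.powersetCard (k+2), (if a ∈ S ∧ b ∈ S then g a * g b else 0)
        = (((U.powersetCard (k+2)).filter (fun S => a ∈ S ∧ b ∈ S)).card : ℝ) * (g a * g b) := by
      intro b
      rw [← Finset.sum_filter, Finset.sum_const, nsmul_eq_mul]
    calc ∑ b ∈ U, ∑ S ∈ U.powersetCard (k+2), (if a ∈ S ∧ b ∈ S then g a * g b else 0)
        = ∑ b ∈ U, (((U.powersetCard (k+2)).filter (fun S => a ∈ S ∧ b ∈ S)).card : ℝ) * (g a * g b) := by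
          exact Finset.sum_congr rfl fun b _ => hcount b
      _ = (((U.powersetCard (k+2)).filter (fun S => a ∈ S ∧ a ∈ S)).card : ℝ) * (g a * g a)
          + ∑ b ∈ U.erase a, (((U.powersetCard (k+2)).filter (fun S => a ∈ S ∧ b ∈ S)).card : ℝ) * (g a * g b) := by
          rw [← Finset.add_sum_erase _ _ ha]
      _ = ((U.card - 1).choose (k+1) : ℝ) * (g a)^2
          + ((U.card - 2).choose k : ℝ) * (g a * ((∑ c ∈ U, g c) - g a)) := by
          have hdiag : ((U.powersetCard (k+2)).filter (fun S => a ∈ S ∧ a ∈ S)).card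
              = (U.card - 1).choose (k+1) := by
            rw [Finset.filter_congr (fun S _ => by simp : ∀ S ∈ U.powersetCard (k+2),
              (a ∈ S ∧ a ∈ S) ↔ a ∈ S)]
            exact count_mem U a ha (k+1)
          have hoff : ∀ b ∈ U.erase a,
              (((U.powersetCard (k+2)).filter (fun S => a ∈ S ∧ b ∈ S)).card : ℝ) * (g a * g b)
              = ((U.card - 2).choose k : ℝ) * (g a * g b) := by
            intro b hb
            rw [count_mem2 U a b ha (Finset.mem_of_mem_erase hb) (fun h => (Finset.mem_erase.mp hb).1 h.symm) k]
          rw [hdiag, Finset.sum_congr rfl hoff, ← Finset.mul_sum, ← Finset.mul_sum,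
            Finset.sum_erase_eq_sub ha]
          ring
  have key3 : ∀ a ∈ U, ∑ S ∈ U.powersetCard (k+2), ∑ b ∈ U,
      (if a ∈ S ∧ b ∈ S then g a * g b else 0)
      = ((U.card - 1).choose (k+1) : ℝ) * (g a)^2
        + ((U.card - 2).choose k : ℝ) * (g a * ((∑ c ∈ U, g c) - g a)) := by
    intro a ha
    rw [Finset.sum_comm]
    exact key2 a ha
  rw [Finset.sum_congr rfl key3, Finset.sum_add_distrib, ← Finset.mul_sum, ← Finset.mul_sum]
  have this1 : ∑ a ∈ U, g a * ((∑ c ∈ U, g c) - g a)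
      = (∑ a ∈ U, g a)^2 - ∑ a ∈ U, (g a)^2 := by
    rw [Finset.sum_congr rfl (fun a _ => mul_sub (g a) _ _), Finset.sum_sub_distrib,
      ← Finset.sum_mul, sq]
    congr 1
    exact Finset.sum_congr rfl fun a _ => (sq (g a)) ▸ rfl
  congr 1
  rw [this1]

noncomputable def enc (N : ℕ) : Finset (Fin N) → ℕ :=
  fun s => (Fintype.equivFin (Finset (Fin N)) s : ℕ)

lemma enc_inj (N : ℕ) : Function.Injective (enc N) := fun s t h =>
  (Fintype.equivFin (Finset (Fin N))).injective (Fin.val_injective h)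

lemma enc_lt_or (N : ℕ) {w : Finset (Fin N)} (h : wᶜ ≠ w) :
    (enc N w < enc N wᶜ) ∨ (enc N wᶜ < enc N w) := by
  have hne : enc N w ≠ enc N wᶜ := fun he => h ((enc_inj N he).symm)
  omega

lemma mirror_image {N : ℕ} (D : Finset (Finset (Fin N))) (hDcl : ∀ s ∈ D, sᶜ ∈ D)
    (hne : ∀ s ∈ D, sᶜ ≠ s) :
    (D.filter (fun w => enc N w < enc N wᶜ)).image compl
      = D.filter (fun w => ¬ (enc N w < enc N wᶜ)) := by
  ext y
  simp only [Finset.mem_image, Finset.mem_filter]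
  constructor
  · rintro ⟨x, ⟨hxD, hx⟩, rfl⟩
    refine ⟨hDcl x hxD, ?_⟩
    rw [compl_compl]
    omega
  · rintro ⟨hyD, hy⟩
    refine ⟨yᶜ, ⟨hDcl y hyD, ?_⟩, compl_compl y⟩
    rw [compl_compl]
    rcases enc_lt_or N (hne y hyD) with h | h
    · exact absurd h hy
    · exact h

lemma pair_sum' {N : ℕ} (D : Finset (Finset (Fin N))) (hDcl : ∀ s ∈ D, sᶜ ∈ D)
    (hne : ∀ s ∈ D, sᶜ ≠ s) (f : Finset (Fin N) → ℝ) (hf : ∀ s, f sᶜ = f s) :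
    ∑ w ∈ D, f w = 2 * ∑ w ∈ D.filter (fun w => enc N w < enc N wᶜ), f w := by
  rw [← Finset.sum_filter_add_sum_filter_not D (fun w => enc N w < enc N wᶜ) f,
    ← mirror_image D hDcl hne, Finset.sum_image (fun x _ y _ h => compl_injective h),
    Finset.sum_congr rfl (fun x _ => hf x)]
  ring

lemma pair_card {N : ℕ} (D : Finset (Finset (Fin N))) (hDcl : ∀ s ∈ D, sᶜ ∈ D)
    (hne : ∀ s ∈ D, sᶜ ≠ s) :
    D.card = 2 * (D.filter (fun w => enc N w < enc N wᶜ)).card := by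
  conv_lhs => rw [← Finset.filter_union_filter_not_eq (fun w => enc N w < enc N wᶜ) D]
  rw [Finset.card_union_of_disjoint (Finset.disjoint_filter_filter_not D D _),
    ← mirror_image D hDcl hne, Finset.card_image_of_injective _ compl_injective]
  ring

lemma design_transport {N : ℕ} (W : Finset (Finset (Fin N)))
    (hcl : ∀ s ∈ W, sᶜ ∈ W) (hne : ∀ s ∈ W, sᶜ ≠ s)
    (H k : ℕ) (hHk : H = 2 * k) (r : Finset (Fin N) → ℝ) (F : ℝ → ℝ) :
    ∑ D ∈ W.powerset.filter (fun D => D.card = H ∧ ∀ s ∈ D, sᶜ ∈ D), F (∑ w ∈ D, r w)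
      = ∑ S ∈ (W.filter (fun w => enc N w < enc N wᶜ)).powersetCard k,
          F (∑ w ∈ S, (r w + r wᶜ)) := by
  apply Finset.sum_nbij' (fun D => D.filter (fun w => enc N w < enc N wᶜ))
    (fun S => S ∪ S.image compl)
  · -- hi : maps into target
    intro D hD
    simp only [Finset.mem_filter, Finset.mem_powerset] at hD
    obtain ⟨hDW, hDcard, hDcl⟩ := hD
    rw [Finset.mem_powersetCard]
    constructor
    · intro x hx
      rw [Finset.mem_filter] at hx ⊢
      exact ⟨hDW hx.1, hx.2⟩
    · have hpc := pair_card D hDcl (fun s hs => hne s (hDW hs))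
      omega
  · -- hj
    intro S hS
    rw [Finset.mem_powersetCard] at hS
    obtain ⟨hSR, hScard⟩ := hS
    have hSW : S ⊆ W := fun x hx => (Finset.mem_filter.mp (hSR hx)).1
    have hScond : ∀ x ∈ S, enc N x < enc N xᶜ := fun x hx =>
      (Finset.mem_filter.mp (hSR hx)).2
    have hdisj : Disjoint S (S.image compl) := by
      rw [Finset.disjoint_right]
      rintro y hy hyS
      obtain ⟨x, hxS, rfl⟩ := Finset.mem_image.mp hy
      have h1 : enc N x < enc N xᶜ := hScond x hxS
      have h2 : enc N xᶜ < enc N xᶜᶜ := hScond xᶜ hyS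
      rw [compl_compl] at h2
      omega
    simp only [Finset.mem_filter, Finset.mem_powerset]
    refine ⟨?_, ?_, ?_⟩
    · intro x hx
      rcases Finset.mem_union.mp hx with h | h
      · exact hSW h
      · obtain ⟨y, hyS, rfl⟩ := Finset.mem_image.mp h
        exact hcl y (hSW hyS)
    · rw [Finset.card_union_of_disjoint hdisj,
        Finset.card_image_of_injective _ compl_injective, hScard, hHk]
      ring
    · intro s hs
      rcases Finset.mem_union.mp hs with h | h
      · exact Finset.mem_union_right _ (Finset.mem_image_of_mem compl h)
      · obtain ⟨y, hyS, rfl⟩ := Finset.mem_image.mp h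
        rw [compl_compl]
        exact Finset.mem_union_left _ hyS
  · -- left_inv
    intro D hD
    simp only [Finset.mem_filter, Finset.mem_powerset] at hD
    obtain ⟨hDW, hDcard, hDcl⟩ := hD
    rw [mirror_image D hDcl (fun s hs => hne s (hDW hs))]
    exact Finset.filter_union_filter_not_eq _ D
  · -- right_inv
    intro S hS
    rw [Finset.mem_powersetCard] at hS
    obtain ⟨hSR, hScard⟩ := hS
    have hScond : ∀ x ∈ S, enc N x < enc N xᶜ := fun x hx =>
      (Finset.mem_filter.mp (hSR hx)).2
    rw [Finset.filter_union]
    have h1 : S.filter (fun w => enc N w < enc N wᶜ) = S :=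
      Finset.filter_true_of_mem hScond
    have h2 : (S.image compl).filter (fun w => enc N w < enc N wᶜ) = ∅ := by
      rw [Finset.filter_eq_empty_iff]
      rintro y hy
      obtain ⟨x, hxS, rfl⟩ := Finset.mem_image.mp hy
      have h1 : enc N x < enc N xᶜ := hScond x hxS
      rw [compl_compl]
      omega
    rw [h1, h2, Finset.union_empty]
  · -- values
    intro D hD
    simp only [Finset.mem_filter, Finset.mem_powerset] at hD
    obtain ⟨hDW, hDcard, hDcl⟩ := hD
    congr 1
    rw [← Finset.sum_filter_add_sum_filter_not D (fun w => enc N w < enc N wᶜ) r,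
      ← mirror_image D hDcl (fun s hs => hne s (hDW hs)),
      Finset.sum_image (fun x _ y _ h => compl_injective h),
      ← Finset.sum_add_distrib]

lemma Qlemma {N : ℕ} (W : Finset (Finset (Fin N)))
    (hcl : ∀ s ∈ W, sᶜ ∈ W) (hne : ∀ s ∈ W, sᶜ ≠ s)
    (r : Finset (Fin N) → ℝ) (hsym : ∀ s, r sᶜ = r s) :
    ∑ p ∈ (W ×ˢ W).filter (fun p => p.2 ≠ p.1 ∧ p.2 ≠ p.1ᶜ), r p.1 * r p.2
      = (∑ w ∈ W, r w)^2 - 2 * ∑ w ∈ W, (r w)^2 := by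
  have htot : ∑ p ∈ W ×ˢ W, r p.1 * r p.2 = (∑ w ∈ W, r w)^2 := by
    rw [Finset.sum_product, sq, Finset.sum_mul_sum]
  have hsplit := Finset.sum_filter_add_sum_filter_not (W ×ˢ W)
    (fun p => p.2 ≠ p.1 ∧ p.2 ≠ p.1ᶜ) (fun p => r p.1 * r p.2)
  have hnot : ∑ p ∈ (W ×ˢ W).filter (fun p => ¬(p.2 ≠ p.1 ∧ p.2 ≠ p.1ᶜ)), r p.1 * r p.2
      = 2 * ∑ w ∈ W, (r w)^2 := by
    rw [Finset.sum_filter, Finset.sum_product]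
    have hrow : ∀ x ∈ W, ∑ y ∈ W, (if ¬(y ≠ x ∧ y ≠ xᶜ) then r x * r y else 0)
        = 2 * (r x)^2 := by
      intro x hx
      rw [← Finset.sum_filter]
      have hfe : W.filter (fun y => ¬(y ≠ x ∧ y ≠ xᶜ)) = {x, xᶜ} := by
        ext y
        simp only [Finset.mem_filter, Finset.mem_insert, Finset.mem_singleton,
          not_and_or, not_not]
        constructor
        · rintro ⟨_, h | h⟩
          · exact Or.inl h
          · exact Or.inr h
        · rintro (rfl | rfl)
          · exact ⟨hx, Or.inl rfl⟩
          · exact ⟨hcl x hx, Or.inr rfl⟩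
      rw [hfe, Finset.sum_pair (fun h => hne x hx h.symm), hsym, sq]
      ring
    rw [Finset.sum_congr rfl hrow, ← Finset.mul_sum]
  linarith [hsplit, htot, hnot]

lemma choose_id1 (n k : ℕ) : (n - 1).choose k * n = (k + 1) * n.choose (k + 1) := by
  cases n with
  | zero => simp
  | succ m =>
    have h : (m + 1) * Nat.choose m k = Nat.choose (m + 1) (k + 1) * (k + 1) :=
      Nat.add_one_mul_choose_eq m k
    simp only [Nat.add_sub_cancel]
    calc Nat.choose m k * (m + 1) = (m + 1) * Nat.choose m k := by ring
      _ = Nat.choose (m + 1) (k + 1) * (k + 1) := h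
      _ = (k + 1) * Nat.choose (m + 1) (k + 1) := by ring

lemma choose_id2 (n j : ℕ) :
    (n - 2).choose j * (n * (n - 1)) = (j + 2) * (j + 1) * n.choose (j + 2) := by
  match n with
  | 0 => simp
  | 1 => simp [Nat.choose_eq_zero_of_lt (by omega : 1 < j + 2)]
  | (m + 2) =>
    have h1 : (m + 1) * Nat.choose m j = Nat.choose (m + 1) (j + 1) * (j + 1) :=
      Nat.add_one_mul_choose_eq m j
    have h2 : (m + 2) * Nat.choose (m + 1) (j + 1) = Nat.choose (m + 2) (j + 2) * (j + 2) :=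
      Nat.add_one_mul_choose_eq (m + 1) (j + 1)
    have e1 : m + 2 - 2 = m := by omega
    have e2 : m + 2 - 1 = m + 1 := by omega
    rw [e1, e2]
    calc Nat.choose m j * ((m + 2) * (m + 1))
        = (m + 2) * ((m + 1) * Nat.choose m j) := by ring
      _ = (m + 2) * (Nat.choose (m + 1) (j + 1) * (j + 1)) := by rw [h1]
      _ = ((m + 2) * Nat.choose (m + 1) (j + 1)) * (j + 1) := by ring
      _ = (Nat.choose (m + 2) (j + 2) * (j + 2)) * (j + 1) := by rw [h2]
      _ = (j + 2) * (j + 1) * Nat.choose (m + 2) (j + 2) := by ring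

lemma sum_sq_bundle {α : Type*} [DecidableEq α] (U : Finset α) (k : ℕ) (g : α → ℝ) :
    ∃ C2 : ℕ,
      C2 * (U.card * (U.card - 1)) = (k + 1) * k * (U.card.choose (k + 1)) ∧
      (k = 0 → C2 = 0) ∧
      ∑ S ∈ U.powersetCard (k + 1), (∑ a ∈ S, g a)^2
        = ((U.card - 1).choose k : ℝ) * ∑ a ∈ U, (g a)^2
          + (C2 : ℝ) * ((∑ a ∈ U, g a)^2 - ∑ a ∈ U, (g a)^2) := by
  cases k with
  | zero =>
    refine ⟨0, by simp, fun _ => rfl, ?_⟩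
    simp only [Nat.cast_zero, zero_mul, add_zero, Nat.choose_zero_right, Nat.cast_one, one_mul]
    rw [Finset.powersetCard_one, Finset.sum_map]
    refine Finset.sum_congr rfl fun a _ => ?_
    simp
  | succ j =>
    refine ⟨(U.card - 2).choose j, ?_, fun h => absurd h (Nat.succ_ne_zero j), ?_⟩
    · exact choose_id2 U.card j
    · exact sum_powersetCard_sq U j g

lemma W_facts (N : ℕ) (hN : 0 < N) (hEven : Even N) (W : Finset (Finset (Fin N)))
    (hW : W = Finset.powersetCard (N / 2) (Finset.univ : Finset (Fin N))) :
    (∀ s ∈ W, sᶜ ∈ W) ∧ (∀ s ∈ W, sᶜ ≠ s) := by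
  obtain ⟨t, ht⟩ := hEven
  constructor
  · intro s hs
    rw [hW, Finset.mem_powersetCard] at hs ⊢
    refine ⟨Finset.subset_univ _, ?_⟩
    rw [Finset.card_compl, Fintype.card_fin, hs.2]
    omega
  · intro s hs h
    rw [hW, Finset.mem_powersetCard] at hs
    have hpos : 0 < s.card := by rw [hs.2]; omega
    obtain ⟨a, ha⟩ := Finset.card_pos.mp hpos
    have : a ∈ sᶜ := h.symm ▸ ha
    exact (Finset.mem_compl.mp this) ha

lemma final_alg (c0 m jj R P2 : ℝ) (h1 : m ≠ 0) (h2 : m-1 ≠ 0) (h3 : jj+1 ≠ 0)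
    (h4 : c0 ≠ 0) (h5 : 2*m-2 ≠ 0) :
  (1/c0) * ((4/(2*(jj+1))^2) * (((jj+1)*c0/m) * P2 + ((jj+1)*jj*c0/(m*(m-1))) * (R^2-P2))
    - (4*((1/(2*m))*(2*R))/(2*(jj+1))) * (((jj+1)*c0/m) * R)
    + c0*((1/(2*m))*(2*R))^2)
  = 2*((2*m - 2*(jj+1))/((2*(jj+1))*(2*m))) * ((1/(2*m))*(2*P2) - (1/((2*m)*((2*m)-2)))*((2*R)^2 - 2*(2*P2))) := by
  field_simp
  ring

lemma formula
    (N : ℕ) (hN : 0 < N) (hEven : Even N)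
    (W : Finset (Finset (Fin N)))
    (hW : W = Finset.powersetCard (N / 2) (Finset.univ : Finset (Fin N)))
    (NA : ℕ) (hNA : NA = W.card)
    (r : Finset (Fin N) → ℝ) (hsym : ∀ s, r sᶜ = r s)
    (𝒦 : ℕ → Finset (Finset (Finset (Fin N))))
    (h𝒦 : ∀ H, 𝒦 H = W.powerset.filter (fun D => D.card = H ∧ ∀ s ∈ D, sᶜ ∈ D))
    (σCR : ℝ) (hσ : σCR = (1 / (NA : ℝ)) * ∑ w ∈ W, r w)
    (V : ℕ → ℝ)
    (hV : ∀ H, V H = (1 / ((𝒦 H).card : ℝ)) *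
        ∑ D ∈ 𝒦 H, ((1 / (H : ℝ)) * (∑ w ∈ D, r w) - σCR) ^ 2)
    (pbar qbar : ℝ)
    (hp : pbar = (1 / (NA : ℝ)) * ∑ w ∈ W, (r w) ^ 2)
    (hq : qbar = (1 / ((NA : ℝ) * ((NA : ℝ) - 2))) *
        ∑ p ∈ (W ×ˢ W).filter (fun p => p.2 ≠ p.1 ∧ p.2 ≠ p.1ᶜ), r p.1 * r p.2)
    (H : ℕ) (hHe : Even H) (hH : 0 < H) (hHle : H ≤ NA) :
    V H = 2 * (((NA : ℝ) - H) / ((H : ℝ) * NA)) * (pbar - qbar) := by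
  obtain ⟨hWcl, hWne⟩ := W_facts N hN hEven W hW
  obtain ⟨k, hHk⟩ : ∃ k, H = 2 * k := by
    obtain ⟨t, ht⟩ := hHe
    exact ⟨t, by omega⟩
  obtain ⟨j, rfl⟩ : ∃ j, k = j + 1 := ⟨k - 1, by omega⟩
  have hMeq := pair_card W hWcl hWne
  have hT := pair_sum' W hWcl hWne r hsym
  have hP : ∑ w ∈ W, (r w)^2
      = 2 * ∑ w ∈ W.filter (fun w => enc N w < enc N wᶜ), (r w)^2 :=
    pair_sum' W hWcl hWne (fun w => (r w)^2) (fun s => congrArg (fun y => y^2) (hsym s))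
  have hQ := Qlemma W hWcl hWne r hsym
  have h1 := design_transport W hWcl hWne H (j+1) hHk r (fun _ => (1:ℝ))
  have h2 := design_transport W hWcl hWne H (j+1) hHk r
    (fun z => ((1 / (H : ℝ)) * z - σCR)^2)
  obtain ⟨C2, hC2id, hC20, hC2sum⟩ :=
    sum_sq_bundle (W.filter (fun w => enc N w < enc N wᶜ)) j r
  have hA := sum_powersetCard_sum (W.filter (fun w => enc N w < enc N wᶜ)) j r
  set Reps := W.filter (fun w => enc N w < enc N wᶜ) with hReps
  set M := Reps.card with hMdef
  set R := ∑ w ∈ Reps, r w with hRdef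
  set P2 := ∑ w ∈ Reps, (r w)^2 with hP2def
  have hNA2M : NA = 2 * M := by rw [hNA, hMeq]
  have hjM : j + 1 ≤ M := by omega
  have hM1 : 1 ≤ M := by omega
  have hRS : ∀ S : Finset (Finset (Fin N)),
      ∑ w ∈ S, (r w + r wᶜ) = 2 * ∑ w ∈ S, r w := by
    intro S
    rw [Finset.mul_sum]
    exact Finset.sum_congr rfl fun w _ => by rw [hsym w]; ring
  have hKcard : ((𝒦 H).card : ℝ) = (M.choose (j+1) : ℝ) := by
    rw [h𝒦 H]
    simp only [Finset.sum_const, nsmul_eq_mul, mul_one] at h1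
    rw [h1, Finset.card_powersetCard]
  have h2' : ∑ D ∈ 𝒦 H, ((1 / (H : ℝ)) * (∑ w ∈ D, r w) - σCR)^2
      = ∑ S ∈ Reps.powersetCard (j+1), ((1 / (H : ℝ)) * (2 * ∑ w ∈ S, r w) - σCR)^2 := by
    rw [h𝒦 H]
    exact h2.trans (Finset.sum_congr rfl fun S _ => by rw [hRS S])
  have hpoint : ∀ x : ℝ, ((1 / (H : ℝ)) * (2 * x) - σCR)^2
      = (4 / (H : ℝ)^2) * x^2 - (4 * σCR / (H : ℝ)) * x + σCR^2 := fun x => by ring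
  have key : V H = (1 / (M.choose (j+1) : ℝ)) *
      ((4 / (H : ℝ)^2) * (((M - 1).choose j : ℝ) * P2 + (C2 : ℝ) * (R^2 - P2))
       - (4 * σCR / (H : ℝ)) * (((M - 1).choose j : ℝ) * R)
       + (M.choose (j+1) : ℝ) * σCR^2) := by
    rw [hV H, hKcard, h2']
    congr 1
    rw [Finset.sum_congr rfl (fun S _ => hpoint _), Finset.sum_add_distrib,
      Finset.sum_sub_distrib, ← Finset.mul_sum, ← Finset.mul_sum, Finset.sum_const,
      Finset.card_powersetCard, nsmul_eq_mul, hC2sum, hA]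
  have hσv : σCR = (1 / (2 * (M : ℝ))) * (2 * R) := by
    rw [hσ, hT, hNA2M]
    push_cast
    ring
  have hpv : pbar = (1 / (2 * (M : ℝ))) * (2 * P2) := by
    rw [hp, hP, hNA2M]
    push_cast
    ring
  have hqv : qbar = (1 / ((2 * (M : ℝ)) * ((2 * (M : ℝ)) - 2)))
      * ((2 * R)^2 - 2 * (2 * P2)) := by
    rw [hq, hQ, hT, hP, hNA2M]
    push_cast
    ring
  have hHr : (H : ℝ) = 2 * ((j : ℝ) + 1) := by
    rw [hHk]; push_cast; ring
  have hNAr : (NA : ℝ) = 2 * (M : ℝ) := by rw [hNA2M]; push_cast; ring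
  rw [key, hσv, hpv, hqv, hHr, hNAr]
  rcases eq_or_lt_of_le hM1 with hMone | hM2
  · -- M = 1
    have hj0 : j = 0 := by omega
    subst hj0
    obtain ⟨x, hx⟩ := Finset.card_eq_one.mp hMone.symm
    have hRx : R = r x := by rw [hRdef, hx, Finset.sum_singleton]
    have hP2x : P2 = (r x)^2 := by rw [hP2def, hx, Finset.sum_singleton]
    have hMr : (M : ℝ) = 1 := by rw [← hMone]; norm_num
    have hC2r : (C2 : ℝ) = 0 := by rw [hC20 rfl]; norm_num
    rw [hRx, hP2x, hMr, hC2r, ← hMone]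
    norm_num
    ring
  · -- 2 ≤ M
    have hMr2 : (2 : ℝ) ≤ (M : ℝ) := by exact_mod_cast hM2
    have hMne : (M : ℝ) ≠ 0 := by linarith
    have hM1ne : (M : ℝ) - 1 ≠ 0 := by linarith
    have hjne : (j : ℝ) + 1 ≠ 0 := by positivity
    have hC0ne : ((M.choose (j+1)) : ℝ) ≠ 0 :=
      Nat.cast_ne_zero.mpr (Nat.choose_pos hjM).ne'
    have hC1v : (((M - 1).choose j) : ℝ) = ((j : ℝ) + 1) * ((M.choose (j+1)) : ℝ) / (M : ℝ) := by
      rw [eq_div_iff hMne]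
      have h := congrArg (Nat.cast : ℕ → ℝ) (choose_id1 M j)
      push_cast at h
      linarith
    have hC2v : (C2 : ℝ) = ((j : ℝ) + 1) * (j : ℝ) * ((M.choose (j+1)) : ℝ)
        / ((M : ℝ) * ((M : ℝ) - 1)) := by
      rw [eq_div_iff (mul_ne_zero hMne hM1ne)]
      have h := congrArg (Nat.cast : ℕ → ℝ) hC2id
      push_cast [Nat.cast_sub hM1] at h
      linarith
    rw [hC1v, hC2v]
    exact final_alg ((M.choose (j+1) : ℕ) : ℝ) (M : ℝ) (j : ℝ) R P2 hMne hM1ne hjne hC0ne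
      (by linarith)

lemma ds_identity {β : Type*} (U : Finset β) (f : β → ℝ) :
    ∑ p ∈ U ×ˢ U, (f p.1 - f p.2)^2
      = 2 * ((U.card : ℝ) * ∑ a ∈ U, (f a)^2 - (∑ a ∈ U, f a)^2) := by
  rw [Finset.sum_product]
  have hrow : ∀ a ∈ U, ∑ b ∈ U, (f a - f b)^2
      = (U.card : ℝ) * (f a)^2 - 2 * f a * (∑ b ∈ U, f b) + ∑ b ∈ U, (f b)^2 := by
    intro a _
    rw [Finset.sum_congr rfl
      (fun b _ => (by ring : (f a - f b)^2 = (f a)^2 - 2 * f a * f b + (f b)^2)),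
      Finset.sum_add_distrib, Finset.sum_sub_distrib, Finset.sum_const, nsmul_eq_mul,
      ← Finset.mul_sum]
  rw [Finset.sum_congr rfl hrow, Finset.sum_add_distrib, Finset.sum_sub_distrib,
    ← Finset.mul_sum, ← Finset.sum_mul, Finset.sum_const, nsmul_eq_mul,
    ← Finset.mul_sum]
  ring

lemma pq_repr
    (N : ℕ) (hN : 0 < N) (hEven : Even N)
    (W : Finset (Finset (Fin N)))
    (hW : W = Finset.powersetCard (N / 2) (Finset.univ : Finset (Fin N)))
    (NA : ℕ) (hNA : NA = W.card)
    (r : Finset (Fin N) → ℝ) (hsym : ∀ s, r sᶜ = r s)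
    (pbar qbar : ℝ)
    (hp : pbar = (1 / (NA : ℝ)) * ∑ w ∈ W, (r w) ^ 2)
    (hq : qbar = (1 / ((NA : ℝ) * ((NA : ℝ) - 2))) *
        ∑ p ∈ (W ×ˢ W).filter (fun p => p.2 ≠ p.1 ∧ p.2 ≠ p.1ᶜ), r p.1 * r p.2) :
    ∃ U : Finset (Finset (Fin N)),
      (∀ w ∈ W, ∃ u ∈ U, r u = r w) ∧
      NA = 2 * U.card ∧
      pbar = (1 / (2 * (U.card : ℝ))) * (2 * ∑ w ∈ U, (r w)^2) ∧
      qbar = (1 / ((2 * (U.card : ℝ)) * ((2 * (U.card : ℝ)) - 2)))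
        * ((2 * ∑ w ∈ U, r w)^2 - 2 * (2 * ∑ w ∈ U, (r w)^2)) := by
  obtain ⟨hWcl, hWne⟩ := W_facts N hN hEven W hW
  have hMeq := pair_card W hWcl hWne
  have hT := pair_sum' W hWcl hWne r hsym
  have hP : ∑ w ∈ W, (r w)^2
      = 2 * ∑ w ∈ W.filter (fun w => enc N w < enc N wᶜ), (r w)^2 :=
    pair_sum' W hWcl hWne (fun w => (r w)^2) (fun s => congrArg (fun y => y^2) (hsym s))
  have hQ := Qlemma W hWcl hWne r hsym
  refine ⟨W.filter (fun w => enc N w < enc N wᶜ), ?_, by omega, ?_, ?_⟩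
  · intro w hw
    by_cases hcw : enc N w < enc N wᶜ
    · exact ⟨w, Finset.mem_filter.mpr ⟨hw, hcw⟩, rfl⟩
    · refine ⟨wᶜ, Finset.mem_filter.mpr ⟨hWcl w hw, ?_⟩, hsym w⟩
      rw [compl_compl]
      rcases enc_lt_or N (hWne w hw) with h | h
      · exact absurd h hcw
      · exact h
  · rw [hp, hP, hNA, hMeq]
    push_cast
    ring
  · rw [hq, hQ, hT, hP, hNA, hMeq]
    push_cast
    ring

lemma pq_nonneg
    (N : ℕ) (hN : 0 < N) (hEven : Even N)
    (W : Finset (Finset (Fin N)))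
    (hW : W = Finset.powersetCard (N / 2) (Finset.univ : Finset (Fin N)))
    (NA : ℕ) (hNA : NA = W.card)
    (r : Finset (Fin N) → ℝ) (hsym : ∀ s, r sᶜ = r s)
    (pbar qbar : ℝ)
    (hp : pbar = (1 / (NA : ℝ)) * ∑ w ∈ W, (r w) ^ 2)
    (hq : qbar = (1 / ((NA : ℝ) * ((NA : ℝ) - 2))) *
        ∑ p ∈ (W ×ˢ W).filter (fun p => p.2 ≠ p.1 ∧ p.2 ≠ p.1ᶜ), r p.1 * r p.2) :
    0 ≤ pbar - qbar := by
  obtain ⟨U, _, hNA2, hpv, hqv⟩ :=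
    pq_repr N hN hEven W hW NA hNA r hsym pbar qbar hp hq
  set c := U.card with hc
  set R := ∑ w ∈ U, r w with hR
  set P2 := ∑ w ∈ U, (r w)^2 with hP2
  have hP2nn : 0 ≤ P2 := Finset.sum_nonneg fun w _ => sq_nonneg _
  rcases le_or_gt c 1 with hc1 | hc2
  · have hz : (2 * (c : ℝ)) * ((2 * (c : ℝ)) - 2) = 0 := by
      interval_cases c <;> norm_num
    rw [hz] at hqv
    simp only [div_zero, one_div, inv_zero, zero_mul] at hqv
    rw [hqv, hpv, sub_zero]
    positivity
  · have hds := ds_identity U r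
    have hdsnn : 0 ≤ ∑ p ∈ U ×ˢ U, (r p.1 - r p.2)^2 :=
      Finset.sum_nonneg fun p _ => sq_nonneg _
    have hkey : 0 ≤ (c : ℝ) * P2 - R^2 := by rw [hR, hP2, hc]; linarith [hds ▸ hdsnn]
    have hcr : (2 : ℝ) ≤ (c : ℝ) := by exact_mod_cast hc2
    have hdiff : pbar - qbar = ((c : ℝ) * P2 - R^2) / ((c : ℝ) * ((c : ℝ) - 1)) := by
      rw [hpv, hqv]
      have h1 : (c : ℝ) ≠ 0 := by linarith
      have h2 : (c : ℝ) - 1 ≠ 0 := by linarith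
      have h3 : 2 * (c : ℝ) - 2 ≠ 0 := by linarith
      field_simp
      ring
    rw [hdiff]
    apply div_nonneg hkey
    nlinarith

lemma pq_pos
    (N : ℕ) (hN : 0 < N) (hEven : Even N)
    (W : Finset (Finset (Fin N)))
    (hW : W = Finset.powersetCard (N / 2) (Finset.univ : Finset (Fin N)))
    (NA : ℕ) (hNA : NA = W.card)
    (r : Finset (Fin N) → ℝ) (hsym : ∀ s, r sᶜ = r s)
    (pbar qbar : ℝ)
    (hp : pbar = (1 / (NA : ℝ)) * ∑ w ∈ W, (r w) ^ 2)
    (hq : qbar = (1 / ((NA : ℝ) * ((NA : ℝ) - 2))) *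
        ∑ p ∈ (W ×ˢ W).filter (fun p => p.2 ≠ p.1 ∧ p.2 ≠ p.1ᶜ), r p.1 * r p.2)
    (hNA3 : 3 ≤ NA) (hnc : ¬ (∀ a ∈ W, ∀ b ∈ W, r a = r b)) :
    0 < pbar - qbar := by
  obtain ⟨U, hsub, hNA2, hpv, hqv⟩ :=
    pq_repr N hN hEven W hW NA hNA r hsym pbar qbar hp hq
  push_neg at hnc
  obtain ⟨a, ha, b, hb, hab⟩ := hnc
  obtain ⟨u, hu, hua⟩ := hsub a ha
  obtain ⟨v, hv, hvb⟩ := hsub b hb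
  have huv : r u ≠ r v := by rw [hua, hvb]; exact hab
  set c := U.card with hc
  set R := ∑ w ∈ U, r w with hR
  set P2 := ∑ w ∈ U, (r w)^2 with hP2
  have hc2 : 2 ≤ c := by omega
  have hds := ds_identity U r
  have hmemuv : (u, v) ∈ U ×ˢ U := Finset.mem_product.mpr ⟨hu, hv⟩
  have hsingle : (r u - r v)^2 ≤ ∑ p ∈ U ×ˢ U, (r p.1 - r p.2)^2 :=
    Finset.single_le_sum (f := fun p : Finset (Fin N) × Finset (Fin N) =>
      (r p.1 - r p.2)^2) (fun p _ => sq_nonneg _) hmemuv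
  have hsq : 0 < (r u - r v)^2 :=
    lt_of_le_of_ne (sq_nonneg _) (Ne.symm (pow_ne_zero 2 (sub_ne_zero.mpr huv)))
  have hkey : 0 < (c : ℝ) * P2 - R^2 := by rw [hR, hP2, hc]; nlinarith [hds]
  have hcr : (2 : ℝ) ≤ (c : ℝ) := by exact_mod_cast hc2
  have hdiff : pbar - qbar = ((c : ℝ) * P2 - R^2) / ((c : ℝ) * ((c : ℝ) - 1)) := by
    rw [hpv, hqv]
    have h1 : (c : ℝ) ≠ 0 := by linarith
    have h2 : (c : ℝ) - 1 ≠ 0 := by linarith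
    have h3 : 2 * (c : ℝ) - 2 ≠ 0 := by linarith
    field_simp
    ring
  rw [hdiff]
  apply div_pos hkey
  nlinarith

/-- Theorem 3 of the paper: the variance, over the family `𝒦 H` of all size-`H`
mirror-closed designs, of the per-design mean `(1/H)∑_{w∈D} r(w)` around
`σ²_CR = (1/N_A)∑_{w∈W} r(w)` equals `2·((N_A−H)/(H·N_A))·(p̄ − q̄)`, where
`p̄` is the mean of `r(w)²` and `q̄` is the mean of `r(w)·r(w')` over all
`N_A(N_A−2)` ordered pairs of distinct non-mirror assignment vectors.
Consequently `V` is weakly decreasing in `H`, and strictly decreasing if `r`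
is not constant on `W`. -/
theorem variance_of_mse_decreasing
    (N : ℕ) (hN : 0 < N) (hEven : Even N)
    (W : Finset (Finset (Fin N)))
    (hW : W = Finset.powersetCard (N / 2) (Finset.univ : Finset (Fin N)))
    (NA : ℕ) (hNA : NA = W.card)
    (r : Finset (Fin N) → ℝ) (hnn : ∀ s, 0 ≤ r s) (hsym : ∀ s, r sᶜ = r s)
    (𝒦 : ℕ → Finset (Finset (Finset (Fin N))))
    (h𝒦 : ∀ H, 𝒦 H = W.powerset.filter (fun D => D.card = H ∧ ∀ s ∈ D, sᶜ ∈ D))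
    (σCR : ℝ) (hσ : σCR = (1 / (NA : ℝ)) * ∑ w ∈ W, r w)
    (V : ℕ → ℝ)
    (hV : ∀ H, V H = (1 / ((𝒦 H).card : ℝ)) *
        ∑ D ∈ 𝒦 H, ((1 / (H : ℝ)) * (∑ w ∈ D, r w) - σCR) ^ 2)
    (pbar qbar : ℝ)
    (hp : pbar = (1 / (NA : ℝ)) * ∑ w ∈ W, (r w) ^ 2)
    (hq : qbar = (1 / ((NA : ℝ) * ((NA : ℝ) - 2))) *
        ∑ p ∈ (W ×ˢ W).filter (fun p => p.2 ≠ p.1 ∧ p.2 ≠ p.1ᶜ), r p.1 * r p.2)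
    (H : ℕ) (hHe : Even H) (hH : 0 < H) (hHle : H ≤ NA) :
    V H = 2 * (((NA : ℝ) - H) / ((H : ℝ) * NA)) * (pbar - qbar) ∧
    (pbar - qbar ≥ 0) ∧
    (∀ H', Even H' → H < H' → H' ≤ NA →
      (V H' ≤ V H ∧ (¬ (∀ a ∈ W, ∀ b ∈ W, r a = r b) → V H' < V H))) := by
  obtain ⟨t, ht⟩ := hHe
  have hHe' : Even H := ⟨t, ht⟩
  refine ⟨formula N hN hEven W hW NA hNA r hsym 𝒦 h𝒦 σCR hσ V hV pbar qbar hp hq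
      H hHe' hH hHle,
    pq_nonneg N hN hEven W hW NA hNA r hsym pbar qbar hp hq, ?_⟩
  intro H' hHe2 hlt hle'
  have hf := formula N hN hEven W hW NA hNA r hsym 𝒦 h𝒦 σCR hσ V hV pbar qbar hp hq
    H hHe' hH hHle
  have hf' := formula N hN hEven W hW NA hNA r hsym 𝒦 h𝒦 σCR hσ V hV pbar qbar hp hq
    H' hHe2 (by omega) hle'
  have hd := pq_nonneg N hN hEven W hW NA hNA r hsym pbar qbar hp hq
  have hHr : (0 : ℝ) < H := by exact_mod_cast hH
  have hH'r : (0 : ℝ) < H' := by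
    have : 0 < H' := by omega
    exact_mod_cast this
  have hNAr : (0 : ℝ) < NA := by
    have : 0 < NA := by omega
    exact_mod_cast this
  have hHH' : (H : ℝ) < H' := by exact_mod_cast hlt
  have hH'NA : (H' : ℝ) ≤ NA := by exact_mod_cast hle'
  have hHNA : (H : ℝ) ≤ NA := by exact_mod_cast hHle
  have hcoef : ((NA : ℝ) - H') / ((H' : ℝ) * NA) ≤ ((NA : ℝ) - H) / ((H : ℝ) * NA) := by
    rw [div_le_div_iff₀ (by positivity) (by positivity)]
    nlinarith [mul_lt_mul_of_pos_right hHH' (mul_pos hNAr hNAr)]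
  constructor
  · rw [hf, hf']
    nlinarith [mul_nonneg (sub_nonneg.mpr hcoef) hd]
  · intro hnc
    have hdpos := pq_pos N hN hEven W hW NA hNA r hsym pbar qbar hp hq (by omega) hnc
    have hcoefs : ((NA : ℝ) - H') / ((H' : ℝ) * NA) < ((NA : ℝ) - H) / ((H : ℝ) * NA) := by
      rw [div_lt_div_iff₀ (by positivity) (by positivity)]
      nlinarith [mul_lt_mul_of_pos_right hHH' (mul_pos hNAr hNAr)]
    rw [hf, hf']
    nlinarith [mul_pos (sub_pos.mpr hcoefs) hdpos]
end

section
/- Fix two distinct indices i, j ∈ {1,…,N} and fix u with 0 ≤ u ≤ N/2. For a uniformly random ordered pair (w_a, w_b) of assignment vectors with U(w_a, w_b) = u, the probability that w_a and w_b both assign units i and j to treatment (i.e., w_aⁱ = w_bⁱ = w_aʲ = w_bʲ = 1) equals (1/(N(N−1)))·(N²/4 − N/2 − N·u + u² + u). -/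
open Finset

lemma inner_count {α : Type*} [DecidableEq α] (G A : Finset α) (hA : A ⊆ G) (m u : ℕ)
    (hAc : A.card = m) (hum : u ≤ m) :
    ((G.powersetCard m).filter (fun B => (A \ B).card = u)).card
      = m.choose u * (G.card - m).choose u := by
  have key : ((G.powersetCard m).filter (fun B => (A \ B).card = u)).card
      = ((A.powersetCard u) ×ˢ ((G \ A).powersetCard u)).card := by
    apply card_bij' (fun B _ => (A \ B, B \ A)) (fun p _ => (A \ p.1) ∪ p.2)
    · intro B hB
      simp only [mem_filter, mem_powersetCard] at hB
      obtain ⟨⟨hBG, hBc⟩, hABu⟩ := hB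
      have h1 : (A ∩ B).card + (A \ B).card = A.card := card_inter_add_card_sdiff A B
      have h2 : (B ∩ A).card + (B \ A).card = B.card := card_inter_add_card_sdiff B A
      rw [inter_comm] at h2
      simp only [mem_product, mem_powersetCard]
      refine ⟨⟨sdiff_subset, hABu⟩, ⟨sdiff_subset_sdiff hBG (le_refl A), ?_⟩⟩
      omega
    · intro p hp
      simp only [mem_product, mem_powersetCard] at hp
      obtain ⟨⟨hSA, hSc⟩, hTG, hTc⟩ := hp
      have hSA' : ∀ x, x ∈ p.1 → x ∈ A := fun x hx => hSA hx
      have hTA : ∀ x, x ∈ p.2 → x ∈ G ∧ x ∉ A := fun x hx => mem_sdiff.mp (hTG hx)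
      have hdisj : Disjoint (A \ p.1) p.2 := by
        rw [disjoint_left]
        intro x hx hx2
        exact (hTA x hx2).2 (mem_sdiff.mp hx).1
      have heq : A \ ((A \ p.1) ∪ p.2) = p.1 := by
        ext x
        simp only [mem_sdiff, mem_union, not_or, not_and, not_not]
        constructor
        · rintro ⟨hxA, h1, h2⟩; exact h1 hxA
        · intro hx
          exact ⟨hSA' x hx, fun _ => hx, fun hxT => (hTA x hxT).2 (hSA' x hx)⟩
      simp only [mem_filter, mem_powersetCard]
      refine ⟨⟨union_subset (sdiff_subset.trans hA) (fun x hx => (hTA x hx).1), ?_⟩, ?_⟩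
      · rw [card_union_of_disjoint hdisj, card_sdiff_of_subset hSA, hAc, hSc, hTc]
        omega
      · rw [heq, hSc]
    · intro B hB
      simp only [mem_filter, mem_powersetCard] at hB
      ext x
      simp only [mem_union, mem_sdiff, not_and, not_not]
      constructor
      · rintro (⟨hxA, h⟩ | ⟨h1, h2⟩)
        · exact h hxA
        · exact h1
      · intro hx
        by_cases hxA : x ∈ A
        · exact Or.inl ⟨hxA, fun _ => hx⟩
        · exact Or.inr ⟨hx, hxA⟩
    · intro p hp
      simp only [mem_product, mem_powersetCard] at hp
      obtain ⟨⟨hSA, hSc⟩, hTG, hTc⟩ := hp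
      have hSA' : ∀ x, x ∈ p.1 → x ∈ A := fun x hx => hSA hx
      have hTA : ∀ x, x ∈ p.2 → x ∈ G ∧ x ∉ A := fun x hx => mem_sdiff.mp (hTG hx)
      have heq : A \ ((A \ p.1) ∪ p.2) = p.1 := by
        ext x
        simp only [mem_sdiff, mem_union, not_or, not_and, not_not]
        constructor
        · rintro ⟨hxA, h1, h2⟩; exact h1 hxA
        · intro hx
          exact ⟨hSA' x hx, fun _ => hx, fun hxT => (hTA x hxT).2 (hSA' x hx)⟩
      have heq2 : ((A \ p.1) ∪ p.2) \ A = p.2 := by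
        ext x
        simp only [mem_sdiff, mem_union]
        constructor
        · rintro ⟨(⟨h1, _⟩ | h), h2⟩
          · exact absurd h1 h2
          · exact h
        · intro hx
          exact ⟨Or.inr hx, (hTA x hx).2⟩
      exact Prod.ext heq heq2
  rw [key, card_product, card_powersetCard, card_powersetCard, hAc, card_sdiff_of_subset hA, hAc]

lemma pairs_count {α : Type*} [DecidableEq α] (G : Finset α) (m u : ℕ) (hum : u ≤ m) :
    (((G.powersetCard m) ×ˢ (G.powersetCard m)).filter
        (fun p => (p.1 \ p.2).card = u)).card
      = G.card.choose m * (m.choose u * (G.card - m).choose u) := by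
  rw [card_filter, Finset.sum_product]
  have h : ∀ A ∈ G.powersetCard m,
      (∑ B ∈ G.powersetCard m, if (A \ B).card = u then 1 else 0)
        = m.choose u * (G.card - m).choose u := by
    intro A hA
    rw [mem_powersetCard] at hA
    rw [← card_filter]
    exact inner_count G A hA.1 m u hA.2 hum
  rw [Finset.sum_congr rfl h, Finset.sum_const, card_powersetCard, smul_eq_mul]

lemma restrict_pairs {α : Type*} [DecidableEq α] [Fintype α] (i j : α) (hij : i ≠ j)
    (m u : ℕ) (hm : 2 ≤ m) :
    ((((univ.powersetCard m) ×ˢ (univ.powersetCard m : Finset (Finset α))).filter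
        (fun p => (p.1 \ p.2).card = u)).filter
        (fun p => i ∈ p.1 ∧ i ∈ p.2 ∧ j ∈ p.1 ∧ j ∈ p.2)).card
      = ((((univ \ ({i,j} : Finset α)).powersetCard (m-2)) ×ˢ
            ((univ \ ({i,j} : Finset α)).powersetCard (m-2))).filter
          (fun p => (p.1 \ p.2).card = u)).card := by
  have hcard2 : ({i,j} : Finset α).card = 2 := by
    rw [card_insert_of_notMem (by simp [hij]), card_singleton]
  refine card_bij' (fun p _ => (p.1 \ {i,j}, p.2 \ {i,j}))
    (fun q _ => (q.1 ∪ {i,j}, q.2 ∪ {i,j})) ?hi ?hj ?li ?ri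
  case hi =>
    intro p hp
    simp only [mem_filter, mem_product, mem_powersetCard, subset_univ, true_and] at hp
    obtain ⟨⟨⟨h1, h2⟩, hu'⟩, hi1, hi2, hj1, hj2⟩ := hp
    have hsub1 : ({i,j} : Finset α) ⊆ p.1 := by
      intro x hx; simp only [mem_insert, mem_singleton] at hx
      rcases hx with rfl | rfl <;> assumption
    have hsub2 : ({i,j} : Finset α) ⊆ p.2 := by
      intro x hx; simp only [mem_insert, mem_singleton] at hx
      rcases hx with rfl | rfl <;> assumption
    have heq : (p.1 \ {i,j}) \ (p.2 \ {i,j}) = p.1 \ p.2 := by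
      ext x
      simp only [mem_sdiff, not_and, not_not]
      constructor
      · rintro ⟨⟨hx1, hx2⟩, h⟩
        exact ⟨hx1, fun hxp2 => absurd (h hxp2) hx2⟩
      · rintro ⟨hx1, hx2⟩
        have hxij : x ∉ ({i,j} : Finset α) := fun hx => hx2 (hsub2 hx)
        exact ⟨⟨hx1, hxij⟩, fun hxp2 => absurd hxp2 hx2⟩
    rw [mem_filter, mem_product, mem_powersetCard, mem_powersetCard]
    refine ⟨⟨⟨sdiff_subset_sdiff (subset_univ _) (le_refl _), ?_⟩,
      sdiff_subset_sdiff (subset_univ _) (le_refl _), ?_⟩, ?_⟩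
    · rw [card_sdiff_of_subset hsub1, h1, hcard2]
    · rw [card_sdiff_of_subset hsub2, h2, hcard2]
    · rw [heq]; exact hu'
  case hj =>
    intro q hq
    simp only [mem_filter, mem_product, mem_powersetCard] at hq
    obtain ⟨⟨⟨hq1, hc1⟩, hq2, hc2⟩, hu'⟩ := hq
    have hd1 : ∀ x ∈ q.1, x ∉ ({i,j} : Finset α) := fun x hx => (mem_sdiff.mp (hq1 hx)).2
    have hd2 : ∀ x ∈ q.2, x ∉ ({i,j} : Finset α) := fun x hx => (mem_sdiff.mp (hq2 hx)).2
    have heq : (q.1 ∪ {i,j}) \ (q.2 ∪ {i,j}) = q.1 \ q.2 := by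
      ext x
      simp only [mem_sdiff, mem_union, not_or]
      constructor
      · rintro ⟨hx1 | hx2, h1, h2⟩
        · exact ⟨hx1, h1⟩
        · exact absurd hx2 h2
      · rintro ⟨hx1, hx2⟩
        exact ⟨Or.inl hx1, hx2, hd1 x hx1⟩
    rw [mem_filter, mem_filter, mem_product, mem_powersetCard, mem_powersetCard]
    refine ⟨⟨⟨⟨subset_univ _, ?_⟩, subset_univ _, ?_⟩, ?_⟩, ?_, ?_, ?_, ?_⟩
    · rw [card_union_of_disjoint (disjoint_left.mpr hd1), hc1, hcard2]; omega
    · rw [card_union_of_disjoint (disjoint_left.mpr hd2), hc2, hcard2]; omega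
    · rw [heq]; exact hu'
    · exact mem_union_right _ (by simp)
    · exact mem_union_right _ (by simp)
    · exact mem_union_right _ (by simp)
    · exact mem_union_right _ (by simp)
  case li =>
    intro p hp
    simp only [mem_filter, mem_product, mem_powersetCard, subset_univ, true_and] at hp
    obtain ⟨⟨⟨h1, h2⟩, hu'⟩, hi1, hi2, hj1, hj2⟩ := hp
    have e1 : p.1 \ {i,j} ∪ {i,j} = p.1 := by
      apply sdiff_union_of_subset
      intro x hx; simp only [mem_insert, mem_singleton] at hx
      rcases hx with rfl | rfl <;> assumption
    have e2 : p.2 \ {i,j} ∪ {i,j} = p.2 := by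
      apply sdiff_union_of_subset
      intro x hx; simp only [mem_insert, mem_singleton] at hx
      rcases hx with rfl | rfl <;> assumption
    show (p.1 \ {i,j} ∪ {i,j}, p.2 \ {i,j} ∪ {i,j}) = p
    rw [e1, e2]
  case ri =>
    intro q hq
    simp only [mem_filter, mem_product, mem_powersetCard] at hq
    obtain ⟨⟨⟨hq1, hc1⟩, hq2, hc2⟩, hu'⟩ := hq
    have hd1 : ∀ x ∈ q.1, x ∉ ({i,j} : Finset α) := fun x hx => (mem_sdiff.mp (hq1 hx)).2
    have hd2 : ∀ x ∈ q.2, x ∉ ({i,j} : Finset α) := fun x hx => (mem_sdiff.mp (hq2 hx)).2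
    have e1 : (q.1 ∪ {i,j}) \ {i,j} = q.1 := by
      ext x
      simp only [mem_sdiff, mem_union]
      constructor
      · rintro ⟨hx | hx, h⟩
        · exact hx
        · exact absurd hx h
      · intro hx
        exact ⟨Or.inl hx, hd1 x hx⟩
    have e2 : (q.2 ∪ {i,j}) \ {i,j} = q.2 := by
      ext x
      simp only [mem_sdiff, mem_union]
      constructor
      · rintro ⟨hx | hx, h⟩
        · exact hx
        · exact absurd hx h
      · intro hx
        exact ⟨Or.inl hx, hd2 x hx⟩
    show ((q.1 ∪ {i,j}) \ {i,j}, (q.2 ∪ {i,j}) \ {i,j}) = q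
    rw [e1, e2]

lemma choose_helper (a b : ℕ) :
    (a+2)*(a+1)*(Nat.choose a b) = (b+2)*(b+1)*(Nat.choose (a+2) (b+2)) := by
  have h1 := Nat.add_one_mul_choose_eq a b
  have h2 := Nat.add_one_mul_choose_eq (a+1) (b+1)
  calc (a+2)*(a+1)*(Nat.choose a b) = (a+2)*((a+1)*Nat.choose a b) := by ring
    _ = (a+2)*(Nat.choose (a+1) (b+1)*(b+1)) := by rw [h1]
    _ = ((a+2)*Nat.choose (a+1) (b+1))*(b+1) := by ring
    _ = (Nat.choose (a+2) (b+2)*(b+2))*(b+1) := by rw [h2]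
    _ = (b+2)*(b+1)*(Nat.choose (a+2) (b+2)) := by ring


/-- The probability `p'₁₁₁₁` from the appendix: for distinct units `i, j` and a
uniformly random ordered pair `(w_a, w_b)` of assignment vectors with pairwise
uniqueness `U(w_a, w_b) = u`, the probability that both `i` and `j` are treated
in both vectors equals `(N²/4 − N/2 − N·u + u² + u)/(N(N−1))`. -/
theorem prob_both_treated_both (N u : ℕ) (hN : 2 ≤ N) (hEven : Even N)
    (hu : u ≤ N / 2)
    (i j : Fin N) (hij : i ≠ j)
    (W : Finset (Finset (Fin N)))
    (hW : W = Finset.powersetCard (N / 2) (Finset.univ : Finset (Fin N)))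
    (P : Finset (Finset (Fin N) × Finset (Fin N)))
    (hP : P = (W ×ˢ W).filter (fun p => (p.1 \ p.2).card = u)) :
    ((P.filter (fun p => i ∈ p.1 ∧ i ∈ p.2 ∧ j ∈ p.1 ∧ j ∈ p.2)).card : ℝ)
        / (P.card : ℝ)
      = ((N : ℝ) ^ 2 / 4 - (N : ℝ) / 2 - (N : ℝ) * u + (u : ℝ) ^ 2 + u)
        / ((N : ℝ) * ((N : ℝ) - 1)) := by
  subst hP hW
  set m := N / 2 with hm
  have hN2m : N = 2 * m := by
    obtain ⟨k, hk⟩ := hEven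
    omega
  have hm1 : 1 ≤ m := by omega
  have hNr : (N : ℝ) = 2 * (m : ℝ) := by exact_mod_cast congrArg (Nat.cast : ℕ → ℝ) hN2m
  have hcard2 : ({i, j} : Finset (Fin N)).card = 2 := by
    rw [card_insert_of_notMem (by simp [hij]), card_singleton]
  by_cases hcase : u + 2 ≤ m
  · -- main case
    -- numerator
    have hnum := restrict_pairs i j hij m u (by omega)
    have hG' : ((univ : Finset (Fin N)) \ {i, j}).card = N - 2 := by
      rw [card_sdiff_of_subset (subset_univ _), hcard2, card_univ, Fintype.card_fin]
    have hnum2 := pairs_count ((univ : Finset (Fin N)) \ {i, j}) (m - 2) u (by omega)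
    rw [hG'] at hnum2
    have e1 : N - 2 - (m - 2) = m := by omega
    rw [e1] at hnum2
    rw [hnum2] at hnum
    -- denominator
    have hden := pairs_count (univ : Finset (Fin N)) m u hu
    rw [card_univ, Fintype.card_fin] at hden
    have e2 : N - m = m := by omega
    rw [e2] at hden
    rw [hnum, hden]
    -- nat identities
    have id1 : N*(N-1)*((N-2).choose (m-2)) = m*(m-1)*(N.choose m) := by
      have h := choose_helper (N-2) (m-2)
      rw [show N-2+2 = N by omega, show N-2+1 = N-1 by omega,
        show m-2+2 = m by omega, show m-2+1 = m-1 by omega] at h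
      exact h
    have id2 : m*(m-1)*((m-2).choose u) = (m-u)*((m-u)-1)*(m.choose u) := by
      have h := choose_helper (m-2) (m-u-2)
      rw [show m-2+2 = m by omega, show m-2+1 = m-1 by omega,
        show m-u-2+2 = m-u by omega, show m-u-2+1 = m-u-1 by omega,
        show m-u-2 = (m-2)-u by omega, Nat.choose_symm (by omega : u ≤ m-2),
        Nat.choose_symm hu] at h
      exact h
    -- cast to ℝ
    have r1 : (N:ℝ)*((N:ℝ)-1)*((N-2).choose (m-2) : ℝ) = (m:ℝ)*((m:ℝ)-1)*(N.choose m : ℝ) := by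
      have := congrArg (Nat.cast : ℕ → ℝ) id1
      push_cast [Nat.cast_sub (show 1 ≤ N by omega), Nat.cast_sub (show 1 ≤ m by omega)] at this
      linarith
    have r2 : (m:ℝ)*((m:ℝ)-1)*((m-2).choose u : ℝ)
        = ((m:ℝ)-u)*((m:ℝ)-u-1)*(m.choose u : ℝ) := by
      have := congrArg (Nat.cast : ℕ → ℝ) id2
      push_cast [Nat.cast_sub (show u ≤ m by omega), Nat.cast_sub (show 1 ≤ m - u by omega), Nat.cast_sub (show 1 ≤ m by omega)]
        at this
      linarith
    have hrhs : ((N : ℝ) ^ 2 / 4 - (N : ℝ) / 2 - (N : ℝ) * u + (u : ℝ) ^ 2 + u)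
        = ((m:ℝ)-u)*((m:ℝ)-u-1) := by
      rw [hNr]; ring
    rw [hrhs]
    have hC : (0:ℝ) < (N.choose m : ℝ) := by
      exact_mod_cast Nat.choose_pos (by omega : m ≤ N)
    have hc3 : (0:ℝ) < (m.choose u : ℝ) := by
      exact_mod_cast Nat.choose_pos hu
    have hNN : (N:ℝ) * ((N:ℝ)-1) ≠ 0 := by
      have : (2:ℝ) ≤ (N:ℝ) := by exact_mod_cast hN
      intro h
      rcases mul_eq_zero.mp h with h' | h' <;> linarith
    have hdenne : ((N.choose m * (m.choose u * m.choose u) : ℕ) : ℝ) ≠ 0 := by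
      push_cast
      positivity
    rw [div_eq_div_iff hdenne hNN]
    push_cast
    linear_combination ((((m-2).choose u : ℝ)) * ((m.choose u : ℝ))) * r1
      + (((N.choose m : ℝ)) * ((m.choose u : ℝ))) * r2
  · -- degenerate case: u = m or u = m - 1
    have hempty : ((((univ.powersetCard m) ×ˢ (univ.powersetCard m : Finset (Finset (Fin N)))).filter
        (fun p => (p.1 \ p.2).card = u)).filter
        (fun p => i ∈ p.1 ∧ i ∈ p.2 ∧ j ∈ p.1 ∧ j ∈ p.2)) = ∅ := by
      rw [Finset.filter_eq_empty_iff]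
      rintro p hp ⟨hi1, hi2, hj1, hj2⟩
      simp only [mem_filter, mem_product, mem_powersetCard, subset_univ, true_and] at hp
      obtain ⟨⟨h1, h2⟩, hu'⟩ := hp
      have hsub1 : ({i,j} : Finset (Fin N)) ⊆ p.1 := by
        intro x hx; simp only [mem_insert, mem_singleton] at hx
        rcases hx with rfl | rfl <;> assumption
      have hsub : p.1 \ p.2 ⊆ p.1 \ {i,j} := by
        intro x hx
        rw [mem_sdiff] at hx ⊢
        refine ⟨hx.1, fun hxij => ?_⟩
        simp only [mem_insert, mem_singleton] at hxij
        rcases hxij with rfl | rfl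
        · exact hx.2 hi2
        · exact hx.2 hj2
      have hle := card_le_card hsub
      rw [hu', card_sdiff_of_subset hsub1, h1, hcard2] at hle
      have hm2 : 2 ≤ m := by
        have := card_le_card hsub1
        rw [hcard2, h1] at this
        exact this
      omega
    rw [hempty]
    have hval : ((N : ℝ) ^ 2 / 4 - (N : ℝ) / 2 - (N : ℝ) * u + (u : ℝ) ^ 2 + u) = 0 := by
      have : u = m ∨ u + 1 = m := by omega
      rcases this with h | h
      · have hur : (u:ℝ) = (m:ℝ) := by exact_mod_cast congrArg (Nat.cast : ℕ → ℝ) h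
        rw [hNr, hur]; ring
      · have hur : (u:ℝ) + 1 = (m:ℝ) := by exact_mod_cast congrArg (Nat.cast : ℕ → ℝ) h
        rw [hNr, ← hur]; ring
    rw [hval]
    simp
end

section
/- Fix distinct i, j and u as above. For a uniformly random ordered pair (w_a, w_b) of assignment vectors with U(w_a, w_b) = u: Pr(w_aⁱ=1, w_bⁱ=0, w_aʲ=1, w_bʲ=0) = (u² − u)/(N(N−1)); Pr(w_aⁱ=1, w_bⁱ=0, w_aʲ=0, w_bʲ=1) = u²/(N(N−1)); and Pr(w_aⁱ=1, w_bⁱ=1, w_aʲ=0, w_bʲ=0) = (N²/4 − N·u + u²)/(N(N−1)). -/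
open Finset

open Finset


variable {α : Type*} [DecidableEq α]

-- card of pairs-product filter as sum
lemma card_filter_prod {β γ : Type*} [DecidableEq β] (s : Finset β) (t : Finset γ)
    (p : β × γ → Prop) [DecidablePred p] :
    ((s ×ˢ t).filter p).card = ∑ a ∈ s, (t.filter fun b => p (a, b)).card := by
  rw [Finset.card_eq_sum_card_fiberwise (f := Prod.fst) (t := s)
    (fun x hx => (Finset.mem_product.1 (Finset.mem_filter.1 hx).1).1)]
  refine Finset.sum_congr rfl fun a ha => ?_
  refine Finset.card_bij' (fun x _ => x.2) (fun b _ => (a, b)) ?_ ?_ ?_ ?_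
  · rintro ⟨x1, x2⟩ hx
    simp only [mem_filter, mem_product] at hx ⊢
    obtain ⟨⟨⟨_, h2⟩, hp⟩, h1⟩ := hx
    subst h1
    exact ⟨h2, hp⟩
  · intro b hb
    simp only [mem_filter, mem_product] at hb ⊢
    exact ⟨⟨⟨ha, hb.1⟩, hb.2⟩, trivial⟩
  · rintro ⟨x1, x2⟩ hx
    simp only [mem_filter] at hx
    simp [← hx.2]
  · intro b hb; rfl

variable {α : Type*} [DecidableEq α]

lemma count_mem_one {s : Finset α} {a : α} (ha : a ∈ s) (n k : ℕ) (hs : s.card = n + 1) :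
    ((s.powersetCard (k+1)).filter (fun S => a ∈ S)).card = n.choose k := by
  have : ((s.powersetCard (k+1)).filter (fun S => a ∈ S)).card
      = ((s.erase a).powersetCard k).card := by
    refine Finset.card_bij' (fun S _ => S.erase a) (fun T _ => insert a T) ?_ ?_ ?_ ?_
    · intro S hS
      simp only [mem_filter, mem_powersetCard] at hS
      obtain ⟨⟨hsub, hcard⟩, haS⟩ := hS
      simp only [mem_powersetCard]
      exact ⟨erase_subset_erase a hsub, by rw [card_erase_of_mem haS, hcard]; rfl⟩
    · intro T hT
      simp only [mem_powersetCard, subset_erase] at hT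
      obtain ⟨⟨hsub, hna⟩, hcard⟩ := hT
      simp only [mem_filter, mem_powersetCard]
      refine ⟨⟨insert_subset ha hsub, ?_⟩, mem_insert_self a T⟩
      rw [card_insert_of_notMem hna, hcard]
    · intro S hS
      simp only [mem_filter] at hS
      exact insert_erase hS.2
    · intro T hT
      simp only [mem_powersetCard, subset_erase] at hT
      exact erase_insert hT.1.2
  rw [this, card_powersetCard, card_erase_of_mem ha, hs]
  rfl

lemma count_not_mem_one {s : Finset α} {a : α} (ha : a ∈ s) (n k : ℕ) (hs : s.card = n + 1) :
    ((s.powersetCard k).filter (fun S => a ∉ S)).card = n.choose k := by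
  have : (s.powersetCard k).filter (fun S => a ∉ S) = (s.erase a).powersetCard k := by
    ext S
    simp only [mem_filter, mem_powersetCard, subset_erase]
    tauto
  rw [this, card_powersetCard, card_erase_of_mem ha, hs]
  rfl
lemma count_mem_not_mem {s : Finset α} {a b : α} (ha : a ∈ s) (hb : b ∈ s) (hab : a ≠ b)
    (n k : ℕ) (hs : s.card = n + 2) :
    ((s.powersetCard (k+1)).filter (fun S => a ∈ S ∧ b ∉ S)).card = n.choose k := by
  have he : (s.powersetCard (k+1)).filter (fun S => a ∈ S ∧ b ∉ S)
      = ((s.erase b).powersetCard (k+1)).filter (fun S => a ∈ S) := by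
    ext S
    simp only [mem_filter, mem_powersetCard, subset_erase]
    tauto
  rw [he, count_mem_one (mem_erase.2 ⟨hab, ha⟩) n k
    (by rw [card_erase_of_mem hb, hs]; rfl)]

lemma count_mem_mem {s : Finset α} {a b : α} (ha : a ∈ s) (hb : b ∈ s) (hab : a ≠ b)
    (n k : ℕ) (hs : s.card = n + 2) :
    ((s.powersetCard (k+2)).filter (fun S => a ∈ S ∧ b ∈ S)).card = n.choose k := by
  have hstep : ((s.powersetCard (k+2)).filter (fun S => a ∈ S ∧ b ∈ S)).card
      = (((s.erase a).powersetCard (k+1)).filter (fun S => b ∈ S)).card := by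
    refine Finset.card_bij' (fun S _ => S.erase a) (fun T _ => insert a T) ?_ ?_ ?_ ?_
    · intro S hS
      simp only [mem_filter, mem_powersetCard] at hS
      obtain ⟨⟨hsub, hcard⟩, haS, hbS⟩ := hS
      simp only [mem_filter, mem_powersetCard]
      exact ⟨⟨erase_subset_erase a hsub, by rw [card_erase_of_mem haS, hcard]; rfl⟩,
        mem_erase.2 ⟨hab.symm, hbS⟩⟩
    · intro T hT
      simp only [mem_filter, mem_powersetCard, subset_erase] at hT
      obtain ⟨⟨⟨hsub, hna⟩, hcard⟩, hbT⟩ := hT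
      simp only [mem_filter, mem_powersetCard]
      exact ⟨⟨insert_subset ha hsub, by rw [card_insert_of_notMem hna, hcard]⟩,
        mem_insert_self a T, mem_insert_of_mem hbT⟩
    · intro S hS
      simp only [mem_filter] at hS
      exact insert_erase hS.2.1
    · intro T hT
      simp only [mem_filter, mem_powersetCard, subset_erase] at hT
      exact erase_insert hT.1.1.2
  rw [hstep, count_mem_one (mem_erase.2 ⟨hab.symm, hb⟩) n k
    (by rw [card_erase_of_mem ha, hs]; rfl)]
variable {α : Type*} [DecidableEq α] [Fintype α]

lemma inner_bij (A : Finset α) (m u : ℕ) (hA : A.card = m)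
    (q : Finset α × Finset α → Prop) [DecidablePred q] :
    (((Finset.univ : Finset α).powersetCard m).filter
        (fun B => (A \ B).card = u ∧ q (A \ B, B \ A))).card
      = (((A.powersetCard u) ×ˢ (Aᶜ.powersetCard u)).filter q).card := by
  have hAB : ∀ B : Finset α, B.card = m → (A \ B).card = u → (B \ A).card = u := by
    intro B hB hu
    have h1 := card_sdiff_add_card_inter A B
    have h2 := card_sdiff_add_card_inter B A
    rw [inter_comm] at h2
    omega
  refine Finset.card_bij' (fun B _ => (A \ B, B \ A))
    (fun p _ => (A \ p.1) ∪ p.2) ?_ ?_ ?_ ?_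
  · intro B hB
    simp only [mem_filter, mem_powersetCard] at hB
    obtain ⟨⟨_, hBc⟩, hABc, hq⟩ := hB
    simp only [mem_filter, mem_product, mem_powersetCard]
    refine ⟨⟨⟨sdiff_subset, hABc⟩, ⟨fun x hx => ?_, hAB B hBc hABc⟩⟩, hq⟩
    · simp only [mem_sdiff] at hx
      simp [hx.2]
  · rintro ⟨S, T⟩ hp
    simp only [mem_filter, mem_product, mem_powersetCard] at hp
    obtain ⟨⟨⟨hSA, hSc⟩, hTA, hTc⟩, hq⟩ := hp
    have hdisjTA : Disjoint T A := by
      refine disjoint_left.2 fun x hx hxA => ?_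
      have := hTA hx; simp at this; exact this hxA
    have hS : A \ ((A \ S) ∪ T) = S := by
      ext x
      simp only [mem_sdiff, mem_union, not_or, not_and, not_not]
      constructor
      · rintro ⟨hxA, h1, _⟩; exact h1 hxA
      · intro hxS
        refine ⟨hSA hxS, fun _ => hxS, disjoint_right.1 hdisjTA (hSA hxS)⟩
    have hT : ((A \ S) ∪ T) \ A = T := by
      ext x
      simp only [mem_sdiff, mem_union]
      constructor
      · rintro ⟨h1 | h1, h2⟩
        · exact absurd h1.1 h2
        · exact h1
      · intro hxT; exact ⟨Or.inr hxT, disjoint_left.1 hdisjTA hxT⟩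
    simp only [mem_filter, mem_powersetCard]
    refine ⟨⟨subset_univ _, ?_⟩, by rw [hS]; exact hSc, by rw [hS, hT]; exact hq⟩
    · rw [card_union_of_disjoint ((hdisjTA.mono_right sdiff_subset).symm)]
      rw [card_sdiff_of_subset hSA, hA, hSc]
      have : u ≤ m := hA ▸ hSc ▸ card_le_card hSA
      omega
  · intro B hB
    ext x
    simp only [mem_union, mem_sdiff]
    tauto
  · rintro ⟨S, T⟩ hp
    simp only [mem_filter, mem_product, mem_powersetCard] at hp
    obtain ⟨⟨⟨hSA, hSc⟩, hTA, hTc⟩, hq⟩ := hp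
    have hdisjTA : Disjoint T A := by
      refine disjoint_left.2 fun x hx hxA => ?_
      have := hTA hx; simp at this; exact this hxA
    have hS : A \ ((A \ S) ∪ T) = S := by
      ext x
      simp only [mem_sdiff, mem_union, not_or, not_and, not_not]
      constructor
      · rintro ⟨hxA, h1, _⟩; exact h1 hxA
      · intro hxS
        refine ⟨hSA hxS, fun _ => hxS, disjoint_right.1 hdisjTA (hSA hxS)⟩
    have hT : ((A \ S) ∪ T) \ A = T := by
      ext x
      simp only [mem_sdiff, mem_union]
      constructor
      · rintro ⟨h1 | h1, h2⟩
        · exact absurd h1.1 h2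
        · exact h1
      · intro hxT; exact ⟨Or.inr hxT, disjoint_left.1 hdisjTA hxT⟩
    simp [hS, hT]

lemma ch1 (n k : ℕ) : (k+1) * (n+1).choose (k+1) = (n+1) * n.choose k := by
  rw [mul_comm, ← Nat.add_one_mul_choose_eq]

lemma ch2 (n k : ℕ) (h : k ≤ n) : (n - k) * n.choose k = n * (n-1).choose k := by
  rcases Nat.eq_zero_or_pos n with rfl | hn
  · interval_cases k; simp
  rcases Nat.eq_or_lt_of_le h with rfl | hk
  · rw [Nat.sub_self, Nat.choose_eq_zero_of_lt (by omega : k - 1 < k)]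
    simp
  · obtain ⟨n', rfl⟩ : ∃ n', n = n' + 1 := ⟨n - 1, by omega⟩
    have hk' : k ≤ n' := by omega
    have hsymm : (n'+1).choose k = (n'+1).choose (n'+1-k) := (Nat.choose_symm (by omega)).symm
    rw [hsymm, show n'+1-k = (n'-k)+1 by omega, ch1 n' (n' - k), Nat.choose_symm hk']
    simp

variable {α : Type*} [DecidableEq α]

lemma count_mem_mem' {s : Finset α} {a b : α} (ha : a ∈ s) (hb : b ∈ s) (hab : a ≠ b)
    (k : ℕ) (hk : 2 ≤ k) :
    ((s.powersetCard k).filter (fun S => a ∈ S ∧ b ∈ S)).card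
      = (s.card - 2).choose (k - 2) := by
  obtain ⟨k', rfl⟩ : ∃ k', k = k' + 2 := ⟨k - 2, by omega⟩
  have h2 : 2 ≤ s.card := by
    have : ({a, b} : Finset α) ⊆ s := by
      intro x hx; simp only [mem_insert, mem_singleton] at hx
      rcases hx with rfl | rfl <;> assumption
    calc 2 = ({a, b} : Finset α).card := (card_pair hab).symm
    _ ≤ s.card := card_le_card this
  rw [count_mem_mem ha hb hab (s.card - 2) k' (by omega)]
  congr 1

lemma count_mem_one' {s : Finset α} {a : α} (ha : a ∈ s) (k : ℕ) (hk : 1 ≤ k) :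
    ((s.powersetCard k).filter (fun S => a ∈ S)).card = (s.card - 1).choose (k - 1) := by
  obtain ⟨k', rfl⟩ : ∃ k', k = k' + 1 := ⟨k - 1, by omega⟩
  have h1 : 1 ≤ s.card := card_pos.2 ⟨a, ha⟩
  rw [count_mem_one ha (s.card - 1) k' (by omega)]
  congr 1

lemma count_not_mem_one' {s : Finset α} {a : α} (ha : a ∈ s) (k : ℕ) :
    ((s.powersetCard k).filter (fun S => a ∉ S)).card = (s.card - 1).choose k := by
  have h1 : 1 ≤ s.card := card_pos.2 ⟨a, ha⟩
  exact count_not_mem_one ha (s.card - 1) k (by omega)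

lemma count_mem_not_mem' {s : Finset α} {a b : α} (ha : a ∈ s) (hb : b ∈ s) (hab : a ≠ b)
    (k : ℕ) (hk : 1 ≤ k) :
    ((s.powersetCard k).filter (fun S => a ∈ S ∧ b ∉ S)).card
      = (s.card - 2).choose (k - 1) := by
  obtain ⟨k', rfl⟩ : ∃ k', k = k' + 1 := ⟨k - 1, by omega⟩
  have h2 : 2 ≤ s.card := by
    have : ({a, b} : Finset α) ⊆ s := by
      intro x hx; simp only [mem_insert, mem_singleton] at hx
      rcases hx with rfl | rfl <;> assumption
    calc 2 = ({a, b} : Finset α).card := (card_pair hab).symm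
    _ ≤ s.card := card_le_card this
  rw [count_mem_not_mem ha hb hab (s.card - 2) k' (by omega)]
  congr 1

lemma pattern_card {α : Type*} [DecidableEq α] [Fintype α] (m u : ℕ)
    (pA : Finset α → Prop) [DecidablePred pA]
    (q : Finset α × Finset α → Prop) [DecidablePred q]
    (pB : Finset α × Finset α → Prop) [DecidablePred pB]
    (hmatch : ∀ A B : Finset α, A.card = m → B.card = m →
        (pB (A, B) ↔ pA A ∧ q (A \ B, B \ A)))
    (c : ℕ)
    (hc : ∀ A : Finset α, A.card = m → pA A →
        (((A.powersetCard u) ×ˢ (Aᶜ.powersetCard u)).filter q).card = c) :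
    (((Finset.univ : Finset α).powersetCard m ×ˢ (Finset.univ : Finset α).powersetCard m).filter
        (fun p => (p.1 \ p.2).card = u ∧ pB p)).card
      = (((Finset.univ : Finset α).powersetCard m).filter pA).card * c := by
  rw [card_filter_prod]
  have step : ∀ A ∈ (Finset.univ : Finset α).powersetCard m,
      ((Finset.univ.powersetCard m).filter fun B => (A \ B).card = u ∧ pB (A, B)).card
      = if pA A then c else 0 := by
    intro A hA
    have hAc : A.card = m := (mem_powersetCard.1 hA).2
    by_cases hpA : pA A
    · rw [if_pos hpA]
      have heq : (Finset.univ.powersetCard m).filter (fun B => (A \ B).card = u ∧ pB (A, B))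
          = (Finset.univ.powersetCard m).filter
              (fun B => (A \ B).card = u ∧ q (A \ B, B \ A)) := by
        apply filter_congr
        intro B hB
        have hBc : B.card = m := (mem_powersetCard.1 hB).2
        exact and_congr_right fun _ => (hmatch A B hAc hBc).trans (and_iff_right hpA)
      rw [heq, inner_bij A m u hAc q, hc A hAc hpA]
    · rw [if_neg hpA, card_eq_zero, filter_eq_empty_iff]
      intro B hB
      have hBc : B.card = m := (mem_powersetCard.1 hB).2
      rw [hmatch A B hAc hBc]
      tauto
  rw [Finset.sum_congr rfl step, ← Finset.sum_filter, Finset.sum_const, smul_eq_mul]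

/-- The probabilities `p'₁₀₁₀`, `p'₁₀₀₁`, `p'₁₁₀₀` from the appendix: for distinct
units `i, j` and a uniformly random ordered pair `(w_a, w_b)` of assignment
vectors with pairwise uniqueness `u`:
`Pr(i,j treated in w_a, neither in w_b) = (u² − u)/(N(N−1))`,
`Pr(i treated only in w_a, j treated only in w_b) = u²/(N(N−1))`,
`Pr(i treated in both, j treated in neither) = (N²/4 − N·u + u²)/(N(N−1))`. -/
theorem prob_treatment_patterns (N u : ℕ) (hN : 2 ≤ N) (hEven : Even N)
    (hu : u ≤ N / 2)
    (i j : Fin N) (hij : i ≠ j)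
    (W : Finset (Finset (Fin N)))
    (hW : W = Finset.powersetCard (N / 2) (Finset.univ : Finset (Fin N)))
    (P : Finset (Finset (Fin N) × Finset (Fin N)))
    (hP : P = (W ×ˢ W).filter (fun p => (p.1 \ p.2).card = u)) :
    (((P.filter (fun p => i ∈ p.1 ∧ i ∉ p.2 ∧ j ∈ p.1 ∧ j ∉ p.2)).card : ℝ)
        / (P.card : ℝ)
      = ((u : ℝ) ^ 2 - u) / ((N : ℝ) * ((N : ℝ) - 1))) ∧
    (((P.filter (fun p => i ∈ p.1 ∧ i ∉ p.2 ∧ j ∉ p.1 ∧ j ∈ p.2)).card : ℝ)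
        / (P.card : ℝ)
      = (u : ℝ) ^ 2 / ((N : ℝ) * ((N : ℝ) - 1))) ∧
    (((P.filter (fun p => i ∈ p.1 ∧ i ∈ p.2 ∧ j ∉ p.1 ∧ j ∉ p.2)).card : ℝ)
        / (P.card : ℝ)
      = ((N : ℝ) ^ 2 / 4 - (N : ℝ) * u + (u : ℝ) ^ 2)
        / ((N : ℝ) * ((N : ℝ) - 1))) := by
  classical
  obtain ⟨m, hmm⟩ := hEven
  have hdiv : N / 2 = m := by omega
  have hm1 : 1 ≤ m := by omega
  have hu' : u ≤ m := by omega
  have hWm : W = (Finset.univ : Finset (Fin N)).powersetCard m := by rw [hW, hdiv]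
  have hcardFin : Fintype.card (Fin N) = N := Fintype.card_fin N
  have hucard : (Finset.univ : Finset (Fin N)).card = N := by
    rw [card_univ, hcardFin]
  have hcomplcard : ∀ A : Finset (Fin N), A.card = m → Aᶜ.card = m := by
    intro A hA
    rw [card_compl, hA, hcardFin]; omega
  -- total count
  have hPcount : P.card = N.choose m * (m.choose u * m.choose u) := by
    have hre : P = ((Finset.univ.powersetCard m ×ˢ Finset.univ.powersetCard m).filter
        (fun p : Finset (Fin N) × Finset (Fin N) =>
          (p.1 \ p.2).card = u ∧ (fun _ => True) p)) := by
      rw [hP, hWm]; simp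
    rw [hre, pattern_card m u (fun _ => True) (fun _ => True) (fun _ => True)
      (fun A B hA hB => by simp) (m.choose u * m.choose u)
      (fun A hA _ => by
        rw [filter_true, card_product, card_powersetCard, card_powersetCard, hA,
          hcomplcard A hA])]
    rw [filter_true, card_powersetCard, hucard]
  -- pattern 1010
  have hC1 : 2 ≤ u → (P.filter (fun p => i ∈ p.1 ∧ i ∉ p.2 ∧ j ∈ p.1 ∧ j ∉ p.2)).card
      = (N-2).choose (m-2) * ((m-2).choose (u-2) * m.choose u) := by
    intro hu2
    rw [hP, hWm, filter_filter]
    rw [pattern_card m u (fun A => i ∈ A ∧ j ∈ A)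
      (fun st => (i ∈ st.1 ∧ j ∈ st.1) ∧ True)
      (fun p => i ∈ p.1 ∧ i ∉ p.2 ∧ j ∈ p.1 ∧ j ∉ p.2)
      (fun A B hA hB => by simp only [mem_sdiff, and_true]; tauto)
      ((m-2).choose (u-2) * m.choose u)
      (fun A hA hpA => by
        rw [filter_product (fun S => i ∈ S ∧ j ∈ S) (fun _ => True), card_product,
          count_mem_mem' hpA.1 hpA.2 hij u hu2, filter_true, card_powersetCard,
          hA, hcomplcard A hA])]
    rw [count_mem_mem' (mem_univ i) (mem_univ j) hij m (by omega), hucard]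
  -- pattern 1001
  have hC2 : 1 ≤ u → (P.filter (fun p => i ∈ p.1 ∧ i ∉ p.2 ∧ j ∉ p.1 ∧ j ∈ p.2)).card
      = (N-2).choose (m-1) * ((m-1).choose (u-1) * (m-1).choose (u-1)) := by
    intro hu1
    rw [hP, hWm, filter_filter]
    rw [pattern_card m u (fun A => i ∈ A ∧ j ∉ A)
      (fun st => i ∈ st.1 ∧ j ∈ st.2)
      (fun p => i ∈ p.1 ∧ i ∉ p.2 ∧ j ∉ p.1 ∧ j ∈ p.2)
      (fun A B hA hB => by simp only [mem_sdiff]; tauto)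
      ((m-1).choose (u-1) * (m-1).choose (u-1))
      (fun A hA hpA => by
        rw [filter_product (fun S => i ∈ S) (fun T => j ∈ T), card_product,
          count_mem_one' hpA.1 u hu1, count_mem_one' (mem_compl.2 hpA.2) u hu1,
          hA, hcomplcard A hA])]
    rw [count_mem_not_mem' (mem_univ i) (mem_univ j) hij m hm1, hucard]
  -- pattern 1100
  have hC3 : (P.filter (fun p => i ∈ p.1 ∧ i ∈ p.2 ∧ j ∉ p.1 ∧ j ∉ p.2)).card
      = (N-2).choose (m-1) * ((m-1).choose u * (m-1).choose u) := by
    rw [hP, hWm, filter_filter]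
    rw [pattern_card m u (fun A => i ∈ A ∧ j ∉ A)
      (fun st => i ∉ st.1 ∧ j ∉ st.2)
      (fun p => i ∈ p.1 ∧ i ∈ p.2 ∧ j ∉ p.1 ∧ j ∉ p.2)
      (fun A B hA hB => by simp only [mem_sdiff]; tauto)
      ((m-1).choose u * (m-1).choose u)
      (fun A hA hpA => by
        rw [filter_product (fun S => i ∉ S) (fun T => j ∉ T), card_product,
          count_not_mem_one' hpA.1 u, count_not_mem_one' (mem_compl.2 hpA.2) u,
          hA, hcomplcard A hA])]
    rw [count_mem_not_mem' (mem_univ i) (mem_univ j) hij m hm1, hucard]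
  -- nonzero denominators
  have hP0 : 0 < P.card := by
    rw [hPcount]
    exact Nat.mul_pos (Nat.choose_pos (by omega))
      (Nat.mul_pos (Nat.choose_pos hu') (Nat.choose_pos hu'))
  have hPne : (P.card : ℝ) ≠ 0 := Nat.cast_ne_zero.2 hP0.ne'
  have hNpos : (0:ℝ) < (N:ℝ) * ((N:ℝ) - 1) := by
    have h2 : (2:ℝ) ≤ (N:ℝ) := by exact_mod_cast hN
    nlinarith
  have hNne : (N:ℝ) * ((N:ℝ) - 1) ≠ 0 := ne_of_gt hNpos
  have hNR : (N:ℝ) = 2 * (m:ℝ) := by rw [hmm]; push_cast; ring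
  -- choose identities (ℕ)
  have e1 : m * N.choose m = N * (N-1).choose (m-1) := by
    have h := ch1 (N-1) (m-1)
    rw [show m-1+1 = m by omega, show N-1+1 = N by omega] at h
    exact h
  have e2' : m * (N-1).choose (m-1) = (N-1) * (N-2).choose (m-1) := by
    have hsymm : (N-1).choose (m-1) = (N-1).choose m := by
      rw [← Nat.choose_symm (show m ≤ N-1 by omega)]
      congr 1; omega
    have h := ch1 (N-2) (m-1)
    rw [show m-1+1 = m by omega, show N-2+1 = N-1 by omega] at h
    rw [hsymm]; exact h
  -- real versions
  have E1 : (m:ℝ) * (N.choose m : ℝ) = (N:ℝ) * ((N-1).choose (m-1) : ℝ) := by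
    exact_mod_cast e1
  have E2' : (m:ℝ) * ((N-1).choose (m-1) : ℝ)
      = ((N:ℝ) - 1) * ((N-2).choose (m-1) : ℝ) := by
    have h := congrArg (fun t : ℕ => (t:ℝ)) e2'
    push_cast [Nat.cast_sub (show 1 ≤ N by omega)] at h
    exact h
  have EA2 : (m:ℝ)^2 * (N.choose m : ℝ)
      = ((N:ℝ) * ((N:ℝ) - 1)) * ((N-2).choose (m-1) : ℝ) := by
    linear_combination (m:ℝ) * E1 + (N:ℝ) * E2'
  refine ⟨?_, ?_, ?_⟩
  · -- pattern 1010
    by_cases hu2 : 2 ≤ u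
    · have hm2 : 2 ≤ m := le_trans hu2 hu'
      rw [div_eq_div_iff hPne hNne, hC1 hu2, hPcount]
      have e3 : u * m.choose u = m * (m-1).choose (u-1) := by
        have h := ch1 (m-1) (u-1)
        rw [show u-1+1 = u by omega, show m-1+1 = m by omega] at h
        exact h
      have e4 : (u-1) * (m-1).choose (u-1) = (m-1) * (m-2).choose (u-2) := by
        have h := ch1 (m-2) (u-2)
        rw [show u-2+1 = u-1 by omega, show m-2+1 = m-1 by omega] at h
        exact h
      have e2 : (m-1) * (N-1).choose (m-1) = (N-1) * (N-2).choose (m-2) := by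
        have h := ch1 (N-2) (m-2)
        rw [show m-2+1 = m-1 by omega, show N-2+1 = N-1 by omega] at h
        exact h
      have E3 : (u:ℝ) * (m.choose u : ℝ) = (m:ℝ) * ((m-1).choose (u-1) : ℝ) := by
        exact_mod_cast e3
      have E4 : ((u:ℝ) - 1) * ((m-1).choose (u-1) : ℝ)
          = ((m:ℝ) - 1) * ((m-2).choose (u-2) : ℝ) := by
        have h := congrArg (fun t : ℕ => (t:ℝ)) e4
        push_cast [Nat.cast_sub (show 1 ≤ u by omega),
          Nat.cast_sub (show 1 ≤ m by omega)] at h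
        exact h
      have E2 : ((m:ℝ) - 1) * ((N-1).choose (m-1) : ℝ)
          = ((N:ℝ) - 1) * ((N-2).choose (m-2) : ℝ) := by
        have h := congrArg (fun t : ℕ => (t:ℝ)) e2
        push_cast [Nat.cast_sub (show 1 ≤ m by omega),
          Nat.cast_sub (show 1 ≤ N by omega)] at h
        exact h
      have EA1 : (m:ℝ) * ((m:ℝ) - 1) * (N.choose m : ℝ)
          = ((N:ℝ) * ((N:ℝ) - 1)) * ((N-2).choose (m-2) : ℝ) := by
        linear_combination ((m:ℝ) - 1) * E1 + (N:ℝ) * E2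
      push_cast
      set a := (N.choose m : ℝ)
      set c := ((N-2).choose (m-2) : ℝ)
      set d := (m.choose u : ℝ)
      set e := ((m-1).choose (u-1) : ℝ)
      set f := ((m-2).choose (u-2) : ℝ)
      -- goal : c * (f * d) * (N * (N-1)) = (u^2 - u) * (a * (d * d))
      linear_combination (-(f*d)) * EA1 + (-(a*d)*((u:ℝ) - 1)) * E3
        + (-(a*d)*(m:ℝ)) * E4 + (f*d*((u:ℝ)*d - d*(u:ℝ))) * E3
    · -- u ≤ 1 : both sides vanish
      have hzero : (P.filter (fun p => i ∈ p.1 ∧ i ∉ p.2 ∧ j ∈ p.1 ∧ j ∉ p.2)) = ∅ := by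
        rw [Finset.filter_eq_empty_iff]
        rintro p hp ⟨h1, h2, h3, h4⟩
        rw [hP, mem_filter] at hp
        have hsub : ({i, j} : Finset (Fin N)) ⊆ p.1 \ p.2 := by
          intro x hx
          simp only [mem_insert, mem_singleton] at hx
          rcases hx with rfl | rfl
          · exact mem_sdiff.2 ⟨h1, h2⟩
          · exact mem_sdiff.2 ⟨h3, h4⟩
        have hle := card_le_card hsub
        rw [card_pair hij, hp.2] at hle
        omega
      have hrhs : (u:ℝ)^2 - (u:ℝ) = 0 := by
        interval_cases u <;> norm_num
      rw [hzero, hrhs]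
      simp
  · -- pattern 1001
    by_cases hu1 : 1 ≤ u
    · rw [div_eq_div_iff hPne hNne, hC2 hu1, hPcount]
      have e3 : u * m.choose u = m * (m-1).choose (u-1) := by
        have h := ch1 (m-1) (u-1)
        rw [show u-1+1 = u by omega, show m-1+1 = m by omega] at h
        exact h
      have E3 : (u:ℝ) * (m.choose u : ℝ) = (m:ℝ) * ((m-1).choose (u-1) : ℝ) := by
        exact_mod_cast e3
      push_cast
      set a := (N.choose m : ℝ)
      set g := ((N-2).choose (m-1) : ℝ)
      set d := (m.choose u : ℝ)
      set e := ((m-1).choose (u-1) : ℝ)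
      -- goal : g * (e * e) * (N * (N-1)) = u^2 * (a * (d * d))
      linear_combination (-(e^2)) * EA2 + (-(a)*((m:ℝ)*e + (u:ℝ)*d)) * E3
    · -- u = 0 : both sides vanish
      have hu0 : u = 0 := by omega
      have hzero : (P.filter (fun p => i ∈ p.1 ∧ i ∉ p.2 ∧ j ∉ p.1 ∧ j ∈ p.2)) = ∅ := by
        rw [Finset.filter_eq_empty_iff]
        rintro p hp ⟨h1, h2, h3, h4⟩
        rw [hP, mem_filter] at hp
        have hmem : i ∈ p.1 \ p.2 := mem_sdiff.2 ⟨h1, h2⟩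
        have := card_pos.2 ⟨i, hmem⟩
        omega
      rw [hzero, hu0]
      simp
  · -- pattern 1100
    rw [div_eq_div_iff hPne hNne, hC3, hPcount]
    have e5 : (m - u) * m.choose u = m * (m-1).choose u := ch2 m u hu'
    have E5 : ((m:ℝ) - (u:ℝ)) * (m.choose u : ℝ) = (m:ℝ) * ((m-1).choose u : ℝ) := by
      have h := congrArg (fun t : ℕ => (t:ℝ)) e5
      push_cast [Nat.cast_sub hu'] at h
      exact h
    push_cast
    set a := (N.choose m : ℝ)
    set g := ((N-2).choose (m-1) : ℝ)
    set d := (m.choose u : ℝ)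
    set k := ((m-1).choose u : ℝ)
    -- goal : g * (k * k) * (N * (N-1)) = (N^2/4 - N*u + u^2) * (a * (d * d))
    linear_combination (-(k^2)) * EA2 + (-(a)*((m:ℝ)*k + ((m:ℝ)-(u:ℝ))*d)) * E5
      + (-(a)*d^2*((2*(m:ℝ)+(N:ℝ))/4 - (u:ℝ))) * hNR
end

section
/- Consider a block design with N/2 blocks of size 2 (exactly one of the two units in each block is treated). The number of admissible assignment vectors is H = 2^(N/2), and its assignment correlation equals φ = Σ_{u=1}^{N/2−1} [C(N/2, u)/(2^(N/2) − 2)]·(4/N)²·(u − N/4)², and N·φ/2 → 1 as N → ∞ (i.e., φ is asymptotically 2/N). -/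
open Filter

namespace BDaux

variable {k : ℕ}

/-- The admissible finset corresponding to choice function `g`. -/
def F (g : Fin k → Bool) : Finset (Fin k × Bool) :=
  Finset.univ.filter (fun p => p.2 = g p.1)

lemma mem_F {g : Fin k → Bool} {p : Fin k × Bool} : p ∈ F g ↔ p.2 = g p.1 := by
  simp [F]

lemma F_inj : Function.Injective (F (k := k)) := by
  intro g h e
  funext b
  have h1 : (b, g b) ∈ F g := mem_F.2 rfl
  rw [e] at h1
  exact mem_F.1 h1

lemma compl_F (g : Fin k → Bool) : (F g)ᶜ = F (fun b => !(g b)) := by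
  ext ⟨b, c⟩
  simp only [Finset.mem_compl, mem_F]
  cases hg : g b <;> cases c <;> simp

lemma card_sdiff_F (g h : Fin k → Bool) :
    (F g \ F h).card = (Finset.univ.filter (fun b => g b ≠ h b)).card := by
  have himg : F g \ F h
      = (Finset.univ.filter fun b => g b ≠ h b).image (fun b => (b, g b)) := by
    ext ⟨b, c⟩
    simp only [Finset.mem_sdiff, mem_F, Finset.mem_image, Finset.mem_filter,
      Finset.mem_univ, true_and, Prod.mk.injEq]
    constructor
    · rintro ⟨rfl, hc⟩
      exact ⟨b, fun e => hc (by rw [e]), rfl, rfl⟩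
    · rintro ⟨b', hb', rfl, rfl⟩
      exact ⟨rfl, fun e => hb' e⟩
  rw [himg, Finset.card_image_of_injective]
  intro a b e
  exact congrArg Prod.fst e

end BDaux

namespace BDaux

/-- The set of admissible assignments. -/
def Adm (k : ℕ) : Finset (Finset (Fin k × Bool)) :=
  Finset.univ.filter (fun s => ∀ b : Fin k, ((b, false) ∈ s ↔ ¬ (b, true) ∈ s))

lemma F_mem_Adm (g : Fin k → Bool) : F g ∈ Adm k := by
  simp only [Adm, Finset.mem_filter, Finset.mem_univ, true_and]
  intro b
  simp only [mem_F]
  cases g b <;> simp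

lemma Adm_eq_image : Adm k = Finset.univ.image (F (k := k)) := by
  ext s
  simp only [Finset.mem_image, Finset.mem_univ, true_and]
  constructor
  · intro hs
    have hs' : ∀ b : Fin k, ((b, false) ∈ s ↔ ¬ (b, true) ∈ s) := by
      simpa [Adm] using hs
    refine ⟨fun b => decide ((b, true) ∈ s), ?_⟩
    ext ⟨b, c⟩
    cases c
    · simp [mem_F, hs' b]
    · simp [mem_F]
  · rintro ⟨g, rfl⟩
    exact F_mem_Adm g

lemma card_Adm : (Adm k).card = 2 ^ k := by
  rw [Adm_eq_image, Finset.card_image_of_injective _ F_inj, Finset.card_univ]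
  simp

end BDaux

namespace BDaux

lemma Pset_eq :
    ((Adm k) ×ˢ (Adm k)).filter (fun p => p.2 ≠ p.1 ∧ p.2 ≠ p.1ᶜ)
      = (Finset.univ.filter (fun q : (Fin k → Bool) × (Fin k → Bool) =>
          q.2 ≠ q.1 ∧ q.2 ≠ fun b => !(q.1 b))).image (fun q => (F q.1, F q.2)) := by
  ext ⟨s, t⟩
  simp only [Finset.mem_filter, Finset.mem_product, Finset.mem_image, Finset.mem_univ,
    true_and, Adm_eq_image, Prod.mk.injEq]
  constructor
  · rintro ⟨⟨⟨g, rfl⟩, ⟨h, rfl⟩⟩, hne, hnc⟩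
    refine ⟨(g, h), ⟨?_, ?_⟩, rfl, rfl⟩
    · exact fun e => hne (congrArg F e)
    · intro e; apply hnc; rw [compl_F]; exact congrArg F e
  · rintro ⟨⟨g, h⟩, ⟨hne, hnc⟩, rfl, rfl⟩
    refine ⟨⟨⟨g, rfl⟩, ⟨h, rfl⟩⟩, ?_, ?_⟩
    · exact fun e => hne (F_inj e)
    · intro e; rw [compl_F] at e; exact hnc (F_inj e)

lemma M_inj : Function.Injective
    (fun q : (Fin k → Bool) × (Fin k → Bool) => (F q.1, F q.2)) := by
  rintro ⟨a, b⟩ ⟨c, d⟩ e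
  simp only [Prod.mk.injEq] at e
  exact Prod.ext (F_inj e.1) (F_inj e.2)

/-- Involution on pairs: replace second component by xor with the first. -/
lemma card_filter_xor (p : (Fin k → Bool) × (Fin k → Bool) → Prop) [DecidablePred p] :
    (Finset.univ.filter p).card
      = (Finset.univ.filter fun q : (Fin k → Bool) × (Fin k → Bool) =>
          p (q.1, fun b => xor (q.1 b) (q.2 b))).card := by
  refine Finset.card_nbij' (fun q => (q.1, fun b => xor (q.1 b) (q.2 b)))
    (fun q => (q.1, fun b => xor (q.1 b) (q.2 b))) ?_ ?_ ?_ ?_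
  all_goals
    rintro ⟨g, h⟩ hq
  all_goals
    have hx : (fun b => g b ^^ (g b ^^ h b)) = h :=
      funext fun b => by cases g b <;> cases h b <;> rfl
  · simp only [Finset.mem_filter, Finset.mem_univ, true_and] at hq ⊢
    simpa [hx] using hq
  · simp only [Finset.mem_coe, Finset.mem_filter, Finset.mem_univ, true_and] at hq ⊢
    exact hq
  · simp only [Prod.mk.injEq]
    exact ⟨trivial, hx⟩
  · simp only [Prod.mk.injEq]
    exact ⟨trivial, hx⟩

end BDaux

namespace BDaux

/-- Number of Boolean functions on `Fin k` with exactly `u` trues. -/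
lemma card_trueCount (u : ℕ) :
    (Finset.univ.filter fun d : Fin k → Bool =>
      (Finset.univ.filter fun b => d b = true).card = u).card = Nat.choose k u := by
  have : (Finset.univ.filter fun d : Fin k → Bool =>
      (Finset.univ.filter fun b => d b = true).card = u).card
      = (Finset.powersetCard u (Finset.univ : Finset (Fin k))).card := by
    refine Finset.card_nbij' (fun d => Finset.univ.filter fun b => d b = true)
      (fun t => fun b => decide (b ∈ t)) ?_ ?_ ?_ ?_
    · intro d hd
      simp only [Finset.mem_coe, Finset.mem_filter, Finset.mem_univ, true_and] at hd
      simp [Finset.mem_powersetCard, hd]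
    · intro t ht
      simp only [Finset.mem_coe, Finset.mem_powersetCard] at ht
      simp only [Finset.mem_coe, Finset.mem_filter, Finset.mem_univ, true_and]
      rw [← ht.2]
      congr 1
      ext b
      simp
    · intro d _
      funext b
      simp only [Finset.mem_filter, Finset.mem_univ, true_and]
      cases hb : d b <;> simp [hb]
    · intro t _
      ext b
      simp
  rw [this, Finset.card_powersetCard]
  simp

lemma xor_eq_self_iff (g d : Fin k → Bool) :
    (fun b => g b ^^ d b) = g ↔ d = fun _ => false := by
  constructor
  · intro e; funext b
    have := congrFun e b
    cases hg : g b <;> cases hd : d b <;> simp [hg, hd] at this ⊢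
  · intro e; funext b
    rw [e]
    cases g b <;> rfl

lemma xor_eq_not_iff (g d : Fin k → Bool) :
    (fun b => g b ^^ d b) = (fun b => !(g b)) ↔ d = fun _ => true := by
  constructor
  · intro e; funext b
    have := congrFun e b
    cases hg : g b <;> cases hd : d b <;> simp [hg, hd] at this ⊢
  · intro e; funext b
    rw [e]
    cases g b <;> rfl

lemma ne_xor_iff (g d : Fin k → Bool) (b : Fin k) :
    (g b ≠ (g b ^^ d b)) ↔ d b = true := by
  cases g b <;> cases hd : d b <;> simp [hd]

lemma count_const_false :
    (Finset.univ.filter fun b : Fin k => (fun _ : Fin k => false) b = true).card = 0 := by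
  simp

lemma count_const_true :
    (Finset.univ.filter fun b : Fin k => (fun _ : Fin k => true) b = true).card = k := by
  simp

/-- The filtered pair count. -/
lemma card_Q_filter (u : ℕ) (hu1 : 1 ≤ u) (hu2 : u ≤ k - 1) (hk : 1 ≤ k) :
    (Finset.univ.filter (fun q : (Fin k → Bool) × (Fin k → Bool) =>
        (q.2 ≠ q.1 ∧ q.2 ≠ fun b => !(q.1 b))
          ∧ (Finset.univ.filter fun b => q.1 b ≠ q.2 b).card = u)).card
      = 2 ^ k * Nat.choose k u := by
  rw [card_filter_xor]
  have huk : u ≠ k := by omega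
  have hu0 : u ≠ 0 := by omega
  have hcongr : (Finset.univ.filter (fun q : (Fin k → Bool) × (Fin k → Bool) =>
        ((fun b => q.1 b ^^ q.2 b) ≠ q.1 ∧ (fun b => q.1 b ^^ q.2 b) ≠ fun b => !(q.1 b))
          ∧ (Finset.univ.filter fun b => q.1 b ≠ (q.1 b ^^ q.2 b)).card = u))
      = (Finset.univ.filter (fun q : (Fin k → Bool) × (Fin k → Bool) =>
          (Finset.univ.filter fun b => q.2 b = true).card = u)) := by
    apply Finset.filter_congr
    rintro ⟨g, d⟩ -
    simp only
    constructor
    · rintro ⟨-, hcnt⟩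
      rw [← hcnt]
      congr 1
      ext b
      simp [ne_xor_iff]
    · intro hcnt
      have hcnt' : (Finset.univ.filter fun b => g b ≠ (g b ^^ d b)).card = u := by
        rw [← hcnt]
        congr 1
        ext b
        simp [ne_xor_iff]
      refine ⟨⟨?_, ?_⟩, hcnt'⟩
      · rw [Ne, xor_eq_self_iff]
        rintro rfl
        rw [count_const_false] at hcnt
        exact hu0 hcnt.symm
      · rw [Ne, xor_eq_not_iff]
        rintro rfl
        rw [count_const_true] at hcnt
        exact huk hcnt.symm
  rw [hcongr]
  have hprod : (Finset.univ.filter (fun q : (Fin k → Bool) × (Fin k → Bool) =>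
      (Finset.univ.filter fun b => q.2 b = true).card = u))
      = (Finset.univ : Finset (Fin k → Bool)) ×ˢ
        (Finset.univ.filter fun d : Fin k → Bool =>
          (Finset.univ.filter fun b => d b = true).card = u) := by
    ext ⟨g, d⟩
    simp [Finset.mem_product]
  rw [hprod, Finset.card_product, card_trueCount]
  simp

/-- The total pair count. -/
lemma card_Q (hk : 1 ≤ k) :
    (Finset.univ.filter (fun q : (Fin k → Bool) × (Fin k → Bool) =>
        q.2 ≠ q.1 ∧ q.2 ≠ fun b => !(q.1 b))).card = 2 ^ k * (2 ^ k - 2) := by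
  rw [card_filter_xor]
  have hcongr : (Finset.univ.filter (fun q : (Fin k → Bool) × (Fin k → Bool) =>
        (fun b => q.1 b ^^ q.2 b) ≠ q.1 ∧ (fun b => q.1 b ^^ q.2 b) ≠ fun b => !(q.1 b)))
      = (Finset.univ.filter (fun q : (Fin k → Bool) × (Fin k → Bool) =>
          q.2 ≠ (fun _ => false) ∧ q.2 ≠ (fun _ => true))) := by
    apply Finset.filter_congr
    rintro ⟨g, d⟩ -
    simp only [Ne, xor_eq_self_iff, xor_eq_not_iff]
  rw [hcongr]
  have hprod : (Finset.univ.filter (fun q : (Fin k → Bool) × (Fin k → Bool) =>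
      q.2 ≠ (fun _ => false) ∧ q.2 ≠ (fun _ => true)))
      = (Finset.univ : Finset (Fin k → Bool)) ×ˢ
        (Finset.univ.filter fun d : Fin k → Bool =>
          d ≠ (fun _ => false) ∧ d ≠ (fun _ => true)) := by
    ext ⟨g, d⟩
    simp [Finset.mem_product]
  rw [hprod, Finset.card_product]
  have hne : (fun _ : Fin k => false) ≠ (fun _ : Fin k => true) := by
    intro e
    have := congrFun e ⟨0, hk⟩
    simp at this
  have hset : (Finset.univ.filter fun d : Fin k → Bool =>
      d ≠ (fun _ => false) ∧ d ≠ (fun _ => true))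
      = Finset.univ \ {(fun _ => false), (fun _ => true)} := by
    ext d
    simp [and_comm]
  rw [hset, Finset.card_sdiff_of_subset (Finset.subset_univ _), Finset.card_pair hne,
    Finset.card_univ]
  simp

end BDaux

namespace BDaux

lemma card_Pset (hk : 1 ≤ k) :
    (((Adm k) ×ˢ (Adm k)).filter (fun p => p.2 ≠ p.1 ∧ p.2 ≠ p.1ᶜ)).card
      = 2 ^ k * (2 ^ k - 2) := by
  rw [Pset_eq, Finset.card_image_of_injective _ M_inj, card_Q hk]

lemma card_Pset_filter (u : ℕ) (hu1 : 1 ≤ u) (hu2 : u ≤ k - 1) (hk : 1 ≤ k) :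
    ((((Adm k) ×ˢ (Adm k)).filter (fun p => p.2 ≠ p.1 ∧ p.2 ≠ p.1ᶜ)).filter
        (fun p => (p.1 \ p.2).card = u)).card
      = 2 ^ k * Nat.choose k u := by
  rw [Pset_eq, Finset.filter_image, Finset.card_image_of_injective _ M_inj,
    Finset.filter_filter]
  rw [← card_Q_filter u hu1 hu2 hk]
  congr 1
  apply Finset.filter_congr
  rintro ⟨g, h⟩ -
  simp only [card_sdiff_F, Ne]

end BDaux

namespace BDaux

lemma sum_choose_cast (k : ℕ) :
    ∑ u ∈ Finset.range (k+1), (Nat.choose k u : ℝ) = 2 ^ k := by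
  rw [← Nat.cast_sum, Nat.sum_range_choose]
  push_cast
  ring

lemma sum_choose_sq (k : ℕ) :
    ∑ u ∈ Finset.range (k+1), (Nat.choose k u : ℝ) * ((u : ℝ) - (k : ℝ)/2)^2
      = 2 ^ k * (k : ℝ) / 4 := by
  induction k with
  | zero => simp
  | succ k ih =>
    set a : ℕ → ℝ := fun u => ((u : ℝ) - ((k : ℝ)+1)/2)^2 with ha
    have hgoal : ∑ u ∈ Finset.range (k+2), ((k+1).choose u : ℝ) * ((u:ℝ) - ((k:ℝ)+1)/2)^2
        = 2 ^ (k+1) * ((k:ℝ)+1) / 4 := by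
      have h1 : ∑ u ∈ Finset.range (k+2), ((k+1).choose u : ℝ) * a u
          = (∑ i ∈ Finset.range (k+1), (k.choose i : ℝ) * a (i+1))
            + ((∑ i ∈ Finset.range (k+1), (k.choose (i+1) : ℝ) * a (i+1)) + a 0) := by
        rw [Finset.sum_range_succ' (fun u => ((k+1).choose u : ℝ) * a u) (k+1)]
        simp only [Nat.choose_succ_succ, Nat.cast_add, add_mul, Finset.sum_add_distrib,
          Nat.choose_zero_right, Nat.cast_one, one_mul]
        ring
      have h2 : (∑ i ∈ Finset.range (k+1), (k.choose (i+1) : ℝ) * a (i+1)) + a 0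
          = ∑ u ∈ Finset.range (k+1), (k.choose u : ℝ) * a u := by
        have e := Finset.sum_range_succ' (fun u => (k.choose u : ℝ) * a u) (k+1)
        rw [Finset.sum_range_succ (fun u => (k.choose u : ℝ) * a u) (k+1)] at e
        simp only [Nat.choose_succ_self, Nat.cast_zero, zero_mul, add_zero,
          Nat.choose_zero_right, Nat.cast_one, one_mul] at e
        linarith
      have h3 : ∀ i : ℕ, a (i+1) + a i = 2*((i:ℝ) - (k:ℝ)/2)^2 + 1/2 := by
        intro i
        simp only [ha]
        push_cast
        ring
      calc ∑ u ∈ Finset.range (k+2), ((k+1).choose u : ℝ) * a u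
          = ∑ i ∈ Finset.range (k+1), (k.choose i : ℝ) * (a (i+1) + a i) := by
            rw [h1, h2, ← Finset.sum_add_distrib]
            congr 1
            funext i
            ring
        _ = ∑ i ∈ Finset.range (k+1),
              ((2:ℝ) * ((k.choose i : ℝ) * ((i:ℝ) - (k:ℝ)/2)^2)
                + (1/2) * (k.choose i : ℝ)) := by
            apply Finset.sum_congr rfl
            intro i _
            rw [h3 i]
            ring
        _ = 2 * (2 ^ k * (k : ℝ) / 4) + (1/2) * 2 ^ k := by
            rw [Finset.sum_add_distrib, ← Finset.mul_sum, ← Finset.mul_sum, ih,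
              sum_choose_cast]
        _ = 2 ^ (k+1) * ((k:ℝ)+1) / 4 := by ring
    convert hgoal using 2 <;> push_cast <;> ring_nf

end BDaux

namespace BDaux

lemma sum_Icc_choose_sq (k : ℕ) (hk : 1 ≤ k) :
    ∑ u ∈ Finset.Icc 1 (k-1), (Nat.choose k u : ℝ) * ((u:ℝ) - (k:ℝ)/2)^2
      = 2^k * (k:ℝ)/4 - (k:ℝ)^2/2 := by
  have hins : Finset.range (k+1) = insert 0 (insert k (Finset.Icc 1 (k-1))) := by
    ext x
    simp only [Finset.mem_range, Finset.mem_insert, Finset.mem_Icc]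
    omega
  have h0 : (0:ℕ) ∉ insert k (Finset.Icc 1 (k-1)) := by
    simp only [Finset.mem_insert, Finset.mem_Icc]
    omega
  have hkn : k ∉ Finset.Icc 1 (k-1) := by
    simp only [Finset.mem_Icc]
    omega
  have h := sum_choose_sq k
  rw [hins, Finset.sum_insert h0, Finset.sum_insert hkn] at h
  simp only [Nat.choose_zero_right, Nat.choose_self, Nat.cast_one, Nat.cast_zero,
    one_mul] at h
  have e1 : ((0:ℝ) - (k:ℝ)/2)^2 = (k:ℝ)^2/4 := by ring
  have e2 : ((k:ℝ) - (k:ℝ)/2)^2 = (k:ℝ)^2/4 := by ring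
  rw [e1, e2] at h
  linarith

end BDaux

open BDaux

/-- Block design with `N/2 = k` blocks of size 2 (units indexed by `Fin k × Bool`,
exactly one unit treated per block): the number of admissible assignment vectors
is `2^(N/2)`, the assignment correlation of the design equals
`∑_{u=1}^{N/2−1} [C(N/2,u)/(2^(N/2) − 2)]·(4/N)²(u − N/4)²`, and
`N·φ/2 → 1` as `N → ∞` (i.e., `φ` is asymptotically `2/N`), where `N = 2k`. -/
theorem block_design_paired_blocks
    (A : ∀ k : ℕ, Finset (Finset (Fin k × Bool)))
    (hA : ∀ k, A k = Finset.univ.filter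
        (fun s => ∀ b : Fin k, ((b, false) ∈ s ↔ ¬ (b, true) ∈ s)))
    (P : ∀ k : ℕ, Finset (Finset (Fin k × Bool) × Finset (Fin k × Bool)))
    (hP : ∀ k, P k = ((A k) ×ˢ (A k)).filter (fun p => p.2 ≠ p.1 ∧ p.2 ≠ p.1ᶜ))
    (φd φf : ℕ → ℝ)
    (hφd : ∀ k, φd k = (4 / (2 * k : ℝ)) ^ 2 *
        ∑ u ∈ Finset.Icc 1 (k - 1),
          ((((P k).filter (fun p => (p.1 \ p.2).card = u)).card : ℝ)
              / ((P k).card : ℝ)) * ((u : ℝ) - (2 * k : ℝ) / 4) ^ 2)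
    (hφf : ∀ k, φf k = ∑ u ∈ Finset.Icc 1 (k - 1),
        ((Nat.choose k u : ℝ) / ((2 : ℝ) ^ k - 2)) *
          (4 / (2 * k : ℝ)) ^ 2 * ((u : ℝ) - (2 * k : ℝ) / 4) ^ 2) :
    (∀ k : ℕ, 0 < k →
      (A k).card = 2 ^ k ∧ φd k = φf k) ∧
    Tendsto (fun k : ℕ => (2 * k : ℝ) * φf k / 2) atTop (nhds 1) := by
  have hAA : ∀ k, A k = Adm k := fun k => hA k
  constructor
  · intro k hk
    constructor
    · rw [hAA k]
      exact card_Adm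
    · rw [hφd k, hφf k, Finset.mul_sum]
      apply Finset.sum_congr rfl
      intro u hu
      rw [Finset.mem_Icc] at hu
      have hk2 : 2 ≤ k := by omega
      have hPc : (P k).card = 2 ^ k * (2 ^ k - 2) := by
        rw [hP k, hAA k]
        exact card_Pset (by omega)
      have hPfc : ((P k).filter (fun p => (p.1 \ p.2).card = u)).card
          = 2 ^ k * Nat.choose k u := by
        rw [hP k, hAA k]
        exact card_Pset_filter u hu.1 hu.2 (by omega)
      rw [hPc, hPfc]
      have h2k : (2:ℕ) ≤ 2 ^ k := by
        calc (2:ℕ) = 2^1 := rfl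
        _ ≤ 2^k := Nat.pow_le_pow_right (by norm_num) (by omega)
      have hcast : ((2 ^ k * (2 ^ k - 2) : ℕ) : ℝ) = 2^k * ((2:ℝ)^k - 2) := by
        push_cast [Nat.cast_sub h2k]
        ring
      have hcast2 : ((2 ^ k * Nat.choose k u : ℕ) : ℝ)
          = 2^k * (Nat.choose k u : ℝ) := by push_cast; ring
      rw [hcast, hcast2, mul_div_mul_left _ _ (by positivity : ((2:ℝ)^k) ≠ 0)]
      ring
  · have hkey : ∀ k : ℕ, 2 ≤ k → (2 * k : ℝ) * φf k / 2
        = (1 - 2*((k:ℝ)/2^k)) / (1 - 2*((1:ℝ)/2^k)) := by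
      intro k hk
      rw [hφf k]
      have hw : ∀ u : ℕ, ((u:ℝ) - (2*(k:ℝ))/4)^2 = ((u:ℝ) - (k:ℝ)/2)^2 := by
        intro u; ring
      have hsum : ∑ u ∈ Finset.Icc 1 (k-1),
          ((Nat.choose k u : ℝ) / ((2 : ℝ) ^ k - 2)) *
            (4 / (2 * k : ℝ)) ^ 2 * ((u : ℝ) - (2 * k : ℝ) / 4) ^ 2
          = (4 / (2 * (k:ℝ))) ^ 2 / ((2:ℝ)^k - 2) *
            ∑ u ∈ Finset.Icc 1 (k-1),
              (Nat.choose k u : ℝ) * ((u:ℝ) - (k:ℝ)/2)^2 := by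
        rw [Finset.mul_sum]
        apply Finset.sum_congr rfl
        intro u _
        rw [hw u]
        ring
      rw [hsum, sum_Icc_choose_sq k (by omega)]
      have hk0 : (k:ℝ) ≠ 0 := by
        have : (0:ℝ) < k := by exact_mod_cast (by omega : 0 < k)
        linarith
      have hp : ((2:ℝ)^k) ≠ 0 := by positivity
      have h4 : (4:ℝ) ≤ 2^k := by
        calc (4:ℝ) = 2^2 := by norm_num
        _ ≤ 2^k := pow_le_pow_right₀ one_le_two hk
      have hne : (2:ℝ)^k - 2 ≠ 0 := by
        intro e
        nlinarith
      field_simp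
      ring
    have hs : Tendsto (fun n : ℕ => ((n:ℝ)/2^n)) atTop (nhds 0) := by
      simpa using tendsto_pow_const_div_const_pow_of_one_lt 1 one_lt_two
    have h1s : Tendsto (fun n : ℕ => ((1:ℝ)/2^n)) atTop (nhds 0) := by
      simpa using tendsto_pow_const_div_const_pow_of_one_lt 0 one_lt_two
    have hnum : Tendsto (fun n : ℕ => 1 - 2*((n:ℝ)/2^n)) atTop (nhds 1) := by
      have := tendsto_const_nhds (α := ℕ) (f := atTop) (x := (1:ℝ)) |>.sub (hs.const_mul 2)
      simpa using this
    have hden : Tendsto (fun n : ℕ => 1 - 2*((1:ℝ)/2^n)) atTop (nhds 1) := by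
      have := tendsto_const_nhds (α := ℕ) (f := atTop) (x := (1:ℝ)) |>.sub (h1s.const_mul 2)
      simpa using this
    have hdiv : Tendsto (fun n : ℕ =>
        (1 - 2*((n:ℝ)/2^n)) / (1 - 2*((1:ℝ)/2^n))) atTop (nhds 1) := by
      have := hnum.div hden one_ne_zero
      rw [div_one] at this; exact this
    have he : (fun n : ℕ => (1 - 2*((n:ℝ)/2^n)) / (1 - 2*((1:ℝ)/2^n)))
        =ᶠ[atTop] (fun k : ℕ => (2 * k : ℝ) * φf k / 2) :=
      Filter.eventually_atTop.2 ⟨2, fun k hk => (hkey k hk).symm⟩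
    exact Filter.Tendsto.congr' he hdiv
end
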